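/- arXiv:2012.00067 — 5 statements merged into one kernel-verified Lean document; each statement's English description precedes it below -/
import Mathlib

section
/- Let N ≥ 1, 1 ≤ q < ∞, and let ũ, ṽ be nonnegative measurable functions on ℝ^N. Suppose there exists A > 0 such that (∫_{ℝ^N∖B(0,2|z|)} ũ(x) dx)^{1/q} ≤ A ṽ(z) for almost every z ∈ ℝ^N. Then there exists C > 0 such that [∫_{ℝ^N} (∫_{B(0,|x|/2)} g(z) dz)^q ũ(x) dx]^{1/q} ≤ C ∫_{ℝ^N} g(x) ṽ(x) dx for every nonnegative measurable function g on ℝ^N. -/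
/-!
With the kernel `1_{|z| < |x|/2} g(z)`, Minkowski's integral inequality in `L^q(ũ dx)` bounds the
left-hand side by `∫ g(z) (∫_{|x| > 2|z|} ũ)^{1/q} dz`, and the hypothesis bounds the last factor
by `A ṽ(z)` for almost every `z`.

Minkowski's inequality comes from Hölder: `∫ F^q ≤ ∫ F^{q-1} ∫ f(·, y) dy ≤ (∫ F^q)^{1/p} R` after
exchanging the integrals, where `R` is the right-hand side. To divide by `(∫ F^q)^{1/p}`, `F` is
first replaced by truncations with finite `L^q` norm, which σ-finiteness provides.
-/

open MeasureTheory Function ENNReal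

theorem ENNReal.rpow_one_div_le_of_le_rpow_one_div_mul {p q : ℝ} (hpq : p.HolderConjugate q)
    {I R : ℝ≥0∞} (hI : I ≠ ∞) (h : I ≤ I ^ (1 / p) * R) : I ^ (1 / q) ≤ R := by
  rcases eq_or_ne I 0 with rfl | hI0
  · rw [zero_rpow_of_pos hpq.symm.one_div_pos]
    exact zero_le
  have hsplit : I ^ (1 / p) * I ^ (1 / q) = I := by
    rw [← rpow_add _ _ hI0 hI, hpq.one_div_add_one_div, div_one, rpow_one]
  rwa [← ENNReal.mul_le_mul_iff_right (rpow_pos (pos_iff_ne_zero.2 hI0) hI).ne'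
    (rpow_ne_top_of_nonneg hpq.one_div_nonneg hI), hsplit]

namespace MeasureTheory

variable {α β : Type*} [MeasurableSpace α] [MeasurableSpace β] {μ : Measure α} {ν : Measure β}

theorem lintegral_eq_iSup_lintegral_min_natCast {f : α → ℝ≥0∞} (hf : Measurable f) :
    ∫⁻ x, f x ∂μ = ⨆ n : ℕ, ∫⁻ x, min (f x) n ∂μ := by
  rw [← lintegral_iSup (fun n => hf.min measurable_const)
    (fun m n hmn x => min_le_min_left _ (Nat.cast_le.2 hmn))]
  congr with x
  rw [← inf_iSup_eq, iSup_natCast, inf_top_eq]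

theorem lintegral_minkowski_of_le_of_ne_top [SFinite μ] [SFinite ν] {p q : ℝ}
    (hpq : p.HolderConjugate q) {f : α → β → ℝ≥0∞} (hf : Measurable (uncurry f))
    {H : α → ℝ≥0∞} (hH : Measurable H) (hHf : ∀ x, H x ≤ ∫⁻ y, f x y ∂ν)
    (hHq : ∫⁻ x, H x ^ q ∂μ ≠ ∞) :
    (∫⁻ x, H x ^ q ∂μ) ^ (1 / q) ≤ ∫⁻ y, (∫⁻ x, f x y ^ q ∂μ) ^ (1 / q) ∂ν := by
  set I := ∫⁻ x, H x ^ q ∂μ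
  refine rpow_one_div_le_of_le_rpow_one_div_mul hpq hHq ?_
  have hq1 : 0 ≤ q - 1 := hpq.symm.sub_one_pos.le
  have hHp : ∀ x, (H x ^ (q - 1)) ^ p = H x ^ q := fun x => by
    rw [← rpow_mul, hpq.symm.sub_one_mul_conj]
  calc I = ∫⁻ x, H x ^ (q - 1) * H x ^ (1 : ℝ) ∂μ := lintegral_congr fun x => by
        rw [← rpow_add_of_nonneg _ _ hq1 zero_le_one, sub_add_cancel]
    _ = ∫⁻ x, H x ^ (q - 1) * H x ∂μ := by simp only [rpow_one]
    _ ≤ ∫⁻ x, H x ^ (q - 1) * ∫⁻ y, f x y ∂ν ∂μ := by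
        gcongr with x
        exact hHf x
    _ = ∫⁻ x, ∫⁻ y, H x ^ (q - 1) * f x y ∂ν ∂μ := lintegral_congr fun x =>
        (lintegral_const_mul _ hf.of_uncurry_left).symm
    _ = ∫⁻ y, ∫⁻ x, H x ^ (q - 1) * f x y ∂μ ∂ν :=
        lintegral_lintegral_swap (((hH.pow_const _).comp measurable_fst).mul hf).aemeasurable
    _ ≤ ∫⁻ y, I ^ (1 / p) * (∫⁻ x, f x y ^ q ∂μ) ^ (1 / q) ∂ν := by
        gcongr with y
        simpa only [Pi.mul_apply, hHp] using lintegral_mul_le_Lp_mul_Lq μ hpq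
          (f := fun x => H x ^ (q - 1)) (hH.pow_const _).aemeasurable
          hf.of_uncurry_right.aemeasurable
    _ = I ^ (1 / p) * ∫⁻ y, (∫⁻ x, f x y ^ q ∂μ) ^ (1 / q) ∂ν :=
        lintegral_const_mul' _ _ (rpow_ne_top_of_nonneg hpq.one_div_nonneg hHq)

theorem lintegral_minkowski [SigmaFinite μ] [SFinite ν] {q : ℝ} (hq : 1 ≤ q)
    {f : α → β → ℝ≥0∞} (hf : Measurable (uncurry f)) :
    (∫⁻ x, (∫⁻ y, f x y ∂ν) ^ q ∂μ) ^ (1 / q) ≤ ∫⁻ y, (∫⁻ x, f x y ^ q ∂μ) ^ (1 / q) ∂ν := by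
  obtain rfl | hq := hq.eq_or_lt
  · simpa using (lintegral_lintegral_swap hf.aemeasurable).le
  have hq0 : 0 < q := zero_lt_one.trans hq
  have hF : Measurable fun x => ∫⁻ y, f x y ∂ν := hf.lintegral_prod_right
  rw [one_div, rpow_inv_le_iff hq0]
  refine lintegral_le_of_forall_fin_meas_le _ fun s _ hμs => ?_
  rw [lintegral_eq_iSup_lintegral_min_natCast (hF.pow_const q)]
  refine iSup_le fun n => ?_
  set H := fun x => min ((∫⁻ y, f x y ∂ν) ^ q) n ^ q⁻¹
  have hHq : ∀ x, H x ^ q = min ((∫⁻ y, f x y ∂ν) ^ q) n := fun x => by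
    simp only [H, ← rpow_mul, inv_mul_cancel₀ hq0.ne', rpow_one]
  have hHF : ∀ x, H x ≤ ∫⁻ y, f x y ∂ν := fun x =>
    (rpow_le_rpow (min_le_left _ _) (inv_nonneg.2 hq0.le)).trans_eq (rpow_rpow_inv hq0.ne' _)
  have hHint : ∫⁻ x, H x ^ q ∂μ.restrict s ≠ ∞ := by
    rw [lintegral_congr hHq]
    refine ne_top_of_le_ne_top ?_ (lintegral_mono fun x => min_le_right _ _)
    simpa using mul_ne_top (natCast_ne_top n) hμs
  have key := lintegral_minkowski_of_le_of_ne_top (μ := μ.restrict s)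
    (Real.HolderConjugate.conjExponent hq).symm hf ((hF.pow_const q).min measurable_const
      |>.pow_const _) hHF hHint
  rw [one_div, rpow_inv_le_iff hq0] at key
  rw [lintegral_congr hHq] at key
  refine key.trans (rpow_le_rpow (lintegral_mono fun y => ?_) hq0.le)
  exact rpow_le_rpow (setLIntegral_le_lintegral _ _) (by positivity)

theorem lintegral_setLIntegral_rpow_le [SigmaFinite μ] [SFinite ν] {q : ℝ} (hq : 1 ≤ q)
    {S : Set (α × β)} (hS : MeasurableSet S) {g : β → ℝ≥0∞} (hg : Measurable g) :
    (∫⁻ x, (∫⁻ y in Prod.mk x ⁻¹' S, g y ∂ν) ^ q ∂μ) ^ (1 / q)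
      ≤ ∫⁻ y, g y * μ ((·, y) ⁻¹' S) ^ (1 / q) ∂ν := by
  have hq0 : 0 < q := zero_lt_one.trans_le hq
  have key := lintegral_minkowski (μ := μ) (ν := ν) hq
    (f := fun x y => S.indicator (fun z => g z.2) (x, y)) ((hg.comp measurable_snd).indicator hS)
  have hsec : ∀ x, (fun y => S.indicator (fun z => g z.2) (x, y)) = (Prod.mk x ⁻¹' S).indicator g :=
    fun _ => rfl
  have hsec' : ∀ y, (fun x => S.indicator (fun z => g z.2) (x, y) ^ q)
      = ((·, y) ⁻¹' S).indicator fun _ => g y ^ q := fun y => by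
    ext x
    by_cases hx : (x, y) ∈ S <;> simp [hx, zero_rpow_of_pos hq0]
  simp only [hsec, hsec', lintegral_indicator (measurable_prodMk_left hS),
    lintegral_indicator_const (measurable_prodMk_right hS)] at key
  refine key.trans_eq (lintegral_congr fun y => ?_)
  rw [mul_rpow_of_nonneg _ _ (by positivity), one_div, rpow_rpow_inv hq0.ne']

end MeasureTheory

theorem weighted_hardy_ball_sufficiency_general (N : ℕ) (q : ℝ)
    (hq1 : 1 ≤ q)
    (u v : EuclideanSpace ℝ (Fin N) → ℝ)
    (humeas : Measurable u)
    (A : ℝ) (hA : 0 < A)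
    (hcond : ∀ᵐ z : EuclideanSpace ℝ (Fin N),
      (∫⁻ x in (Metric.ball (0 : EuclideanSpace ℝ (Fin N)) (2 * ‖z‖))ᶜ,
          ENNReal.ofReal (u x)) ^ (1 / q) ≤ ENNReal.ofReal (A * v z)) :
    ∃ C : ℝ, 0 < C ∧ ∀ g : EuclideanSpace ℝ (Fin N) → ℝ,
      Measurable g → (∀ x, 0 ≤ g x) →
      (∫⁻ x, (∫⁻ z in Metric.ball (0 : EuclideanSpace ℝ (Fin N)) (‖x‖ / 2),
            ENNReal.ofReal (g z)) ^ q * ENNReal.ofReal (u x)) ^ (1 / q)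
        ≤ ENNReal.ofReal C * ∫⁻ x, ENNReal.ofReal (g x * v x) := by
  refine ⟨A, hA, fun g hg hg0 => ?_⟩
  set μ := volume.withDensity fun x => ENNReal.ofReal (u x)
  set S := {p : EuclideanSpace ℝ (Fin N) × EuclideanSpace ℝ (Fin N) | ‖p.2‖ < ‖p.1‖ / 2}
  have hS : MeasurableSet S := measurableSet_lt (by fun_prop) (by fun_prop)
  have hSx : ∀ x, Prod.mk x ⁻¹' S = Metric.ball 0 (‖x‖ / 2) := fun x => by ext; simp [S]
  have hSz : ∀ z, μ ((·, z) ⁻¹' S)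
      ≤ ∫⁻ x in (Metric.ball (0 : EuclideanSpace ℝ (Fin N)) (2 * ‖z‖))ᶜ, ENNReal.ofReal (u x) :=
    fun z => by
      rw [withDensity_apply _ (measurable_prodMk_right hS)]
      refine lintegral_mono_set fun x hx => ?_
      simp only [Set.mem_preimage, Set.mem_ofPred_eq, S] at hx
      simp only [Set.mem_compl_iff, Metric.mem_ball, dist_zero_right, not_lt]
      linarith
  calc _ = (∫⁻ x, (∫⁻ z in Prod.mk x ⁻¹' S, ENNReal.ofReal (g z)) ^ q ∂μ) ^ (1 / q) := by
        rw [lintegral_withDensity_eq_lintegral_mul_non_measurable _ humeas.ennreal_ofReal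
          (ae_of_all _ fun _ => ofReal_lt_top)]
        simp only [hSx, Pi.mul_apply, mul_comm]
    _ ≤ ∫⁻ z, ENNReal.ofReal (g z) * μ ((·, z) ⁻¹' S) ^ (1 / q) :=
        lintegral_setLIntegral_rpow_le hq1 hS hg.ennreal_ofReal
    _ ≤ ∫⁻ z, ENNReal.ofReal A * ENNReal.ofReal (g z * v z) := by
        refine lintegral_mono_ae (hcond.mono fun z hz => ?_)
        calc ENNReal.ofReal (g z) * μ ((·, z) ⁻¹' S) ^ (1 / q)
            ≤ ENNReal.ofReal (g z) * ENNReal.ofReal (A * v z) := by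
              gcongr
              exact (rpow_le_rpow (hSz z) (by positivity)).trans hz
          _ = ENNReal.ofReal A * ENNReal.ofReal (g z * v z) := by
              rw [ofReal_mul hA.le, ofReal_mul (hg0 z), mul_left_comm]
    _ = ENNReal.ofReal A * ∫⁻ z, ENNReal.ofReal (g z * v z) :=
        lintegral_const_mul' _ _ ofReal_ne_top

/-- Remark 2.3 of the paper: the weaker (a.e.) condition suffices for the
weighted Hardy-type inequality over balls. -/
theorem weighted_hardy_ball_sufficiency (N : ℕ) (hN : 1 ≤ N) (q : ℝ)
    (hq1 : 1 ≤ q)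
    (u v : EuclideanSpace ℝ (Fin N) → ℝ)
    (hu0 : ∀ x, 0 ≤ u x) (hv0 : ∀ x, 0 ≤ v x)
    (humeas : Measurable u) (hvmeas : Measurable v)
    (A : ℝ) (hA : 0 < A)
    (hcond : ∀ᵐ z : EuclideanSpace ℝ (Fin N),
      (∫⁻ x in (Metric.ball (0 : EuclideanSpace ℝ (Fin N)) (2 * ‖z‖))ᶜ,
          ENNReal.ofReal (u x)) ^ (1 / q) ≤ ENNReal.ofReal (A * v z)) :
    ∃ C : ℝ, 0 < C ∧ ∀ g : EuclideanSpace ℝ (Fin N) → ℝ,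
      Measurable g → (∀ x, 0 ≤ g x) →
      (∫⁻ x, (∫⁻ z in Metric.ball (0 : EuclideanSpace ℝ (Fin N)) (‖x‖ / 2),
            ENNReal.ofReal (g z)) ^ q * ENNReal.ofReal (u x)) ^ (1 / q)
        ≤ ENNReal.ofReal C * ∫⁻ x, ENNReal.ofReal (g x * v x) :=
  weighted_hardy_ball_sufficiency_general N q hq1 u v humeas A hA hcond
end

section
/- Let N ≥ 2. There exists a constant C > 0, depending only on N, such that for every vector field φ ∈ C^1(ℝ^N∖{0}; ℝ^N) whose functions |φ(x)| and |x|·|Dφ(x)| are locally integrable on ℝ^N, and every smooth compactly supported vector field f : ℝ^N → ℝ^N with div f = 0, one has |∫_{ℝ^N} φ(y)·f(y) dy| ≤ C ∫_{ℝ^N} |f(y)| |y| |Dφ(y)| dy. -/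
open MeasureTheory Real

/-- The divergence `∑ⱼ ∂fⱼ/∂xⱼ` of a vector field on `ℝ^N`. -/
noncomputable def diverg (N : ℕ)
    (f : EuclideanSpace ℝ (Fin N) → EuclideanSpace ℝ (Fin N))
    (x : EuclideanSpace ℝ (Fin N)) : ℝ :=
  ∑ j : Fin N, fderiv ℝ (fun y => f y j) x (EuclideanSpace.single j 1)

open Filter RealInnerProductSpace

section Aux

/-- A smooth transition function vanishing on `(-∞,1]` and equal to `1` on `[4,∞)`. -/
noncomputable def psiAux : ℝ → ℝ := fun t => Real.smoothTransition ((t - 1) / 3)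

lemma psiAux_contDiff : ContDiff ℝ 2 psiAux :=
  (Real.smoothTransition.contDiff (n := 2)).comp ((contDiff_id.sub contDiff_const).div_const 3)

lemma psiAux_zero {t : ℝ} (h : t ≤ 1) : psiAux t = 0 :=
  Real.smoothTransition.zero_of_nonpos (by linarith)

lemma psiAux_one {t : ℝ} (h : 4 ≤ t) : psiAux t = 1 :=
  Real.smoothTransition.one_of_one_le (by linarith)

lemma psiAux_nonneg (t : ℝ) : 0 ≤ psiAux t := Real.smoothTransition.nonneg _

lemma psiAux_le_one (t : ℝ) : psiAux t ≤ 1 := Real.smoothTransition.le_one _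

lemma psiAux_deriv_lt {t : ℝ} (h : t < 1) : deriv psiAux t = 0 := by
  have hEq : psiAux =ᶠ[nhds t] fun _ => (0 : ℝ) :=
    Filter.eventuallyEq_of_mem (Iio_mem_nhds h) (fun s hs => psiAux_zero (le_of_lt hs))
  rw [hEq.deriv_eq, deriv_const]

lemma psiAux_deriv_gt {t : ℝ} (h : 4 < t) : deriv psiAux t = 0 := by
  have hEq : psiAux =ᶠ[nhds t] fun _ => (1 : ℝ) :=
    Filter.eventuallyEq_of_mem (Ioi_mem_nhds h) (fun s hs => psiAux_one (le_of_lt hs))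
  rw [hEq.deriv_eq, deriv_const]

lemma psiAux_bound : ∃ M : ℝ, 1 ≤ M ∧ ∀ t, |deriv psiAux t| ≤ M := by
  obtain ⟨M₀, hM₀⟩ := (isCompact_Icc (a := (0:ℝ)) (b := 5)).exists_bound_of_continuousOn
    (psiAux_contDiff.continuous_deriv one_le_two).continuousOn
  refine ⟨max M₀ 1, le_max_right _ _, fun t => ?_⟩
  by_cases ht : t ∈ Set.Icc (0:ℝ) 5
  · exact le_trans (by simpa using hM₀ t ht) (le_max_left _ _)
  · have : deriv psiAux t = 0 := by
      rcases not_and_or.1 ht with h | h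
      · exact psiAux_deriv_lt (by push_neg at h; linarith)
      · exact psiAux_deriv_gt (by push_neg at h; linarith)
    rw [this, abs_zero]
    exact le_trans zero_le_one (le_max_right _ _)

end Aux

section Main

variable {N : ℕ}

local notation "E" => EuclideanSpace ℝ (Fin N)

/-- The truncated test function `χ_ε(x) * ⟪φ(x), x⟫`. -/
noncomputable def gAux (N : ℕ) (φ : EuclideanSpace ℝ (Fin N) → EuclideanSpace ℝ (Fin N))
    (ε : ℝ) : EuclideanSpace ℝ (Fin N) → ℝ :=
  fun x => psiAux ((ε ^ 2)⁻¹ * ⟪x, x⟫) * ⟪φ x, x⟫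

lemma gAux_small {φ : E → E} {ε : ℝ} (hε : 0 < ε) {x : E} (hx : ‖x‖ < ε) :
    gAux N φ ε =ᶠ[nhds x] fun _ => (0 : ℝ) := by
  have hmem : Metric.ball (0 : E) ε ∈ nhds x :=
    Metric.isOpen_ball.mem_nhds (by simpa [mem_ball_zero_iff] using hx)
  refine Filter.eventuallyEq_of_mem hmem (fun y hy => ?_)
  have hy' : ‖y‖ < ε := mem_ball_zero_iff.1 hy
  have h1 : ⟪y, y⟫ ≤ ε ^ 2 := by
    rw [real_inner_self_eq_norm_sq]; nlinarith [norm_nonneg y]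
  have h2 : (ε ^ 2)⁻¹ * ⟪y, y⟫ ≤ 1 := by
    have := mul_le_mul_of_nonneg_left h1 (le_of_lt (inv_pos.mpr (by positivity : (0:ℝ) < ε ^ 2)))
    calc (ε ^ 2)⁻¹ * ⟪y, y⟫ ≤ (ε ^ 2)⁻¹ * ε ^ 2 := this
      _ = 1 := inv_mul_cancel₀ (by positivity)
  show psiAux ((ε ^ 2)⁻¹ * ⟪y, y⟫) * ⟪φ y, y⟫ = 0
  rw [psiAux_zero h2, zero_mul]

lemma gAux_diffAt {φ : E → E} (hφ : ContDiffOn ℝ 1 φ {(0 : E)}ᶜ)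
    {ε : ℝ} (hε : 0 < ε) (x : E) : DifferentiableAt ℝ (gAux N φ ε) x := by
  rcases eq_or_ne x 0 with rfl | hx
  · exact (differentiableAt_const (0:ℝ)).congr_of_eventuallyEq
      (gAux_small hε (by simpa using hε))
  · have hφx : DifferentiableAt ℝ φ x :=
      (hφ.contDiffAt (compl_singleton_mem_nhds hx)).differentiableAt one_ne_zero
    have h1 : DifferentiableAt ℝ (fun y : E => psiAux ((ε ^ 2)⁻¹ * ⟪y, y⟫)) x := by
      have hin : DifferentiableAt ℝ (fun y : E => (ε ^ 2)⁻¹ * ⟪y, y⟫) x :=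
        (differentiableAt_id.inner ℝ differentiableAt_id).const_mul _
      exact (psiAux_contDiff.differentiable two_ne_zero _).comp x hin
    exact h1.mul (hφx.inner ℝ differentiableAt_id)

set_option maxHeartbeats 3000000 in
lemma gAux_key {φ : E → E} (hφ : ContDiffOn ℝ 1 φ {(0 : E)}ᶜ)
    {M ε : ℝ} (hM : 1 ≤ M) (hMb : ∀ t, |deriv psiAux t| ≤ M) (hε : 0 < ε)
    {x : E} (hx : x ≠ 0) :
    ‖fderiv ℝ (gAux N φ ε) x‖ ≤ (8 * M + 1) * ‖φ x‖ + ‖x‖ * ‖fderiv ℝ φ x‖ ∧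
    (2 * ε < ‖x‖ → ∀ v : E, fderiv ℝ (gAux N φ ε) x v
        = ⟪φ x, v⟫ + ⟪fderiv ℝ φ x v, x⟫) := by
  have hε2 : (0:ℝ) < ε ^ 2 := by positivity
  have hφx : DifferentiableAt ℝ φ x :=
    (hφ.contDiffAt (compl_singleton_mem_nhds hx)).differentiableAt one_ne_zero
  set t := (ε ^ 2)⁻¹ * ⟪x, x⟫ with ht
  set Lq : E →L[ℝ] ℝ := (fderivInnerCLM ℝ ((x : E), x)).comp
      ((ContinuousLinearMap.id ℝ E).prod (ContinuousLinearMap.id ℝ E)) with hLq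
  have hq : HasFDerivAt (fun y : E => ⟪y, y⟫) Lq x :=
    (hasFDerivAt_id x).inner ℝ (hasFDerivAt_id x)
  have hq' : HasFDerivAt (fun y : E => (ε ^ 2)⁻¹ * ⟪y, y⟫) ((ε ^ 2)⁻¹ • Lq) x :=
    hq.const_mul _
  have hψd : HasDerivAt psiAux (deriv psiAux t) t :=
    (psiAux_contDiff.differentiable two_ne_zero t).hasDerivAt
  have hχ : HasFDerivAt (fun y : E => psiAux ((ε ^ 2)⁻¹ * ⟪y, y⟫))
      (deriv psiAux t • ((ε ^ 2)⁻¹ • Lq)) x := hψd.comp_hasFDerivAt (h₂ := psiAux) x hq'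
  set U : E →L[ℝ] ℝ := (fderivInnerCLM ℝ (φ x, x)).comp
      ((fderiv ℝ φ x).prod (ContinuousLinearMap.id ℝ E)) with hU
  have hUd : HasFDerivAt (fun y : E => ⟪φ y, y⟫) U x :=
    hφx.hasFDerivAt.inner ℝ (hasFDerivAt_id x)
  have hg : HasFDerivAt (gAux N φ ε)
      (psiAux t • U + ⟪φ x, x⟫ • (deriv psiAux t • ((ε ^ 2)⁻¹ • Lq))) x := hχ.mul hUd
  have hfd : fderiv ℝ (gAux N φ ε) x
      = psiAux t • U + ⟪φ x, x⟫ • (deriv psiAux t • ((ε ^ 2)⁻¹ • Lq)) := hg.fderiv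
  have hUeval : ∀ v : E, U v = ⟪φ x, v⟫ + ⟪fderiv ℝ φ x v, x⟫ := by
    intro v
    simp [hU, fderivInnerCLM_apply]
  have hUnorm : ‖U‖ ≤ ‖φ x‖ + ‖x‖ * ‖fderiv ℝ φ x‖ := by
    refine ContinuousLinearMap.opNorm_le_bound _ (by positivity) (fun v => ?_)
    rw [hUeval v]
    have h1 : |⟪φ x, v⟫| ≤ ‖φ x‖ * ‖v‖ := abs_real_inner_le_norm _ _
    have h2 : |⟪fderiv ℝ φ x v, x⟫| ≤ ‖fderiv ℝ φ x v‖ * ‖x‖ := abs_real_inner_le_norm _ _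
    have h3 : ‖fderiv ℝ φ x v‖ ≤ ‖fderiv ℝ φ x‖ * ‖v‖ := (fderiv ℝ φ x).le_opNorm v
    have h4 : ‖⟪φ x, v⟫ + ⟪fderiv ℝ φ x v, x⟫‖
        ≤ |⟪φ x, v⟫| + |⟪fderiv ℝ φ x v, x⟫| := norm_add_le _ _
    have h5 : ‖fderiv ℝ φ x v‖ * ‖x‖ ≤ ‖fderiv ℝ φ x‖ * ‖v‖ * ‖x‖ :=
      mul_le_mul_of_nonneg_right h3 (norm_nonneg _)
    calc ‖⟪φ x, v⟫ + ⟪fderiv ℝ φ x v, x⟫‖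
        ≤ ‖φ x‖ * ‖v‖ + ‖fderiv ℝ φ x‖ * ‖v‖ * ‖x‖ := by
          refine h4.trans (add_le_add h1 (h2.trans h5))
      _ = (‖φ x‖ + ‖x‖ * ‖fderiv ℝ φ x‖) * ‖v‖ := by ring
  have hLqnorm : ‖Lq‖ ≤ 2 * ‖x‖ := by
    refine ContinuousLinearMap.opNorm_le_bound _ (by positivity) (fun v => ?_)
    have hLqv : Lq v = ⟪x, v⟫ + ⟪v, x⟫ := by simp [hLq, fderivInnerCLM_apply]
    rw [hLqv]
    have h1 : |⟪x, v⟫| ≤ ‖x‖ * ‖v‖ := abs_real_inner_le_norm _ _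
    have h2 : |⟪v, x⟫| ≤ ‖v‖ * ‖x‖ := abs_real_inner_le_norm _ _
    calc ‖⟪x, v⟫ + ⟪v, x⟫‖ ≤ |⟪x, v⟫| + |⟪v, x⟫| := norm_add_le _ _
      _ ≤ ‖x‖ * ‖v‖ + ‖v‖ * ‖x‖ := add_le_add h1 h2
      _ = 2 * ‖x‖ * ‖v‖ := by ring
  clear_value t Lq U
  have hDχx : ‖deriv psiAux t • ((ε ^ 2)⁻¹ • Lq)‖ * ‖x‖ ≤ 8 * M := by
    rcases le_or_gt ‖x‖ (2 * ε) with h | h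
    · have hxx : (ε ^ 2)⁻¹ * (‖x‖ * ‖x‖) ≤ 4 := by
        have h1 : ‖x‖ * ‖x‖ ≤ 4 * ε ^ 2 := by nlinarith [norm_nonneg x]
        calc (ε ^ 2)⁻¹ * (‖x‖ * ‖x‖) ≤ (ε ^ 2)⁻¹ * (4 * ε ^ 2) :=
              mul_le_mul_of_nonneg_left h1 (le_of_lt (inv_pos.mpr hε2))
          _ = 4 * ((ε ^ 2)⁻¹ * ε ^ 2) := by ring
          _ = 4 := by rw [inv_mul_cancel₀ (ne_of_gt hε2)]; ring
      have hnorm : ‖deriv psiAux t • ((ε ^ 2)⁻¹ • Lq)‖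
          = |deriv psiAux t| * ((ε ^ 2)⁻¹ * ‖Lq‖) := by
        rw [norm_smul (deriv psiAux t) ((ε ^ 2)⁻¹ • Lq), norm_smul ((ε ^ 2)⁻¹) Lq,
          Real.norm_eq_abs, Real.norm_eq_abs, abs_of_pos (inv_pos.mpr hε2)]
      rw [hnorm]
      have hψb := hMb t
      have hLx : ‖Lq‖ * ‖x‖ ≤ 2 * (‖x‖ * ‖x‖) := by nlinarith [norm_nonneg x, hLqnorm]
      have hinv : (0:ℝ) ≤ (ε ^ 2)⁻¹ := le_of_lt (inv_pos.mpr hε2)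
      have step : ((ε ^ 2)⁻¹ * ‖Lq‖) * ‖x‖ ≤ 8 := by
        calc ((ε ^ 2)⁻¹ * ‖Lq‖) * ‖x‖ = (ε ^ 2)⁻¹ * (‖Lq‖ * ‖x‖) := by ring
          _ ≤ (ε ^ 2)⁻¹ * (2 * (‖x‖ * ‖x‖)) := mul_le_mul_of_nonneg_left hLx hinv
          _ = 2 * ((ε ^ 2)⁻¹ * (‖x‖ * ‖x‖)) := by ring
          _ ≤ 2 * 4 := by linarith
          _ = 8 := by norm_num
      have hnn : (0:ℝ) ≤ ((ε ^ 2)⁻¹ * ‖Lq‖) * ‖x‖ := by positivity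
      calc |deriv psiAux t| * ((ε ^ 2)⁻¹ * ‖Lq‖) * ‖x‖
          = |deriv psiAux t| * (((ε ^ 2)⁻¹ * ‖Lq‖) * ‖x‖) := by ring
        _ ≤ M * (((ε ^ 2)⁻¹ * ‖Lq‖) * ‖x‖) := mul_le_mul_of_nonneg_right hψb hnn
        _ ≤ M * 8 := mul_le_mul_of_nonneg_left step (by linarith)
        _ = 8 * M := by ring
    · have h4 : (4:ℝ) < t := by
        have h1 : 4 * ε ^ 2 < ‖x‖ ^ 2 := by nlinarith [norm_nonneg x]
        have h2 := mul_lt_mul_of_pos_left h1 (inv_pos.mpr hε2)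
        rw [ht, real_inner_self_eq_norm_sq]
        calc (4:ℝ) = (ε ^ 2)⁻¹ * (4 * ε ^ 2) := by
              rw [show (ε ^ 2)⁻¹ * (4 * ε ^ 2) = 4 * ((ε ^ 2)⁻¹ * ε ^ 2) by ring,
                inv_mul_cancel₀ (ne_of_gt hε2), mul_one]
          _ < (ε ^ 2)⁻¹ * ‖x‖ ^ 2 := h2
      rw [psiAux_deriv_gt h4, zero_smul, norm_zero, zero_mul]
      linarith
  constructor
  · rw [hfd]
    have h1 : ‖psiAux t • U + ⟪φ x, x⟫ • (deriv psiAux t • ((ε ^ 2)⁻¹ • Lq))‖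
        ≤ |psiAux t| * ‖U‖ + |⟪φ x, x⟫| * ‖deriv psiAux t • ((ε ^ 2)⁻¹ • Lq)‖ := by
      refine (norm_add_le _ _).trans ?_
      rw [norm_smul (psiAux t) U, norm_smul (⟪φ x, x⟫) (deriv psiAux t • (ε ^ 2)⁻¹ • Lq),
        Real.norm_eq_abs, Real.norm_eq_abs]
    have h2 : |psiAux t| ≤ 1 := by
      rw [abs_of_nonneg (psiAux_nonneg t)]; exact psiAux_le_one t
    have h3 : |⟪φ x, x⟫| ≤ ‖φ x‖ * ‖x‖ := abs_real_inner_le_norm _ _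
    have h4 : |⟪φ x, x⟫| * ‖deriv psiAux t • ((ε ^ 2)⁻¹ • Lq)‖ ≤ 8 * M * ‖φ x‖ := by
      have hD0 : (0:ℝ) ≤ ‖deriv psiAux t • ((ε ^ 2)⁻¹ • Lq)‖ := norm_nonneg _
      nlinarith [norm_nonneg (φ x), norm_nonneg x, hDχx]
    have h5 : |psiAux t| * ‖U‖ ≤ ‖φ x‖ + ‖x‖ * ‖fderiv ℝ φ x‖ := by
      have : (0:ℝ) ≤ ‖U‖ := norm_nonneg _
      nlinarith [abs_nonneg (psiAux t)]
    calc ‖psiAux t • U + ⟪φ x, x⟫ • (deriv psiAux t • ((ε ^ 2)⁻¹ • Lq))‖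
        ≤ |psiAux t| * ‖U‖ + |⟪φ x, x⟫| * ‖deriv psiAux t • ((ε ^ 2)⁻¹ • Lq)‖ := h1
      _ ≤ (‖φ x‖ + ‖x‖ * ‖fderiv ℝ φ x‖) + 8 * M * ‖φ x‖ := add_le_add h5 h4
      _ = (8 * M + 1) * ‖φ x‖ + ‖x‖ * ‖fderiv ℝ φ x‖ := by ring
  · intro h2ε v
    have h4 : (4:ℝ) < t := by
      have h1 : 4 * ε ^ 2 < ‖x‖ ^ 2 := by nlinarith [norm_nonneg x]
      have h2 := mul_lt_mul_of_pos_left h1 (inv_pos.mpr hε2)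
      rw [ht, real_inner_self_eq_norm_sq]
      calc (4:ℝ) = (ε ^ 2)⁻¹ * (4 * ε ^ 2) := by
            rw [show (ε ^ 2)⁻¹ * (4 * ε ^ 2) = 4 * ((ε ^ 2)⁻¹ * ε ^ 2) by ring,
              inv_mul_cancel₀ (ne_of_gt hε2), mul_one]
        _ < (ε ^ 2)⁻¹ * ‖x‖ ^ 2 := h2
    rw [hfd]
    rw [psiAux_deriv_gt h4, psiAux_one (le_of_lt h4)]
    simp [hUeval v]

lemma main_est (hN : 2 ≤ N) {φ : E → E} (hφ : ContDiffOn ℝ 1 φ {(0 : E)}ᶜ)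
    (hφ1 : LocallyIntegrable (fun x : E => ‖φ x‖))
    (hφ2 : LocallyIntegrable (fun x : E => ‖x‖ * ‖fderiv ℝ φ x‖))
    {f : E → E} (hf : ContDiff ℝ (⊤ : ℕ∞) f) (hfc : HasCompactSupport f)
    (hdiv : ∀ x, diverg N f x = 0) :
    |(∫ y, (inner ℝ (φ y) (f y) : ℝ))| ≤ 1 * ∫ y, ‖f y‖ * (‖y‖ * ‖fderiv ℝ φ y‖) := by
  obtain ⟨M, hM, hMb⟩ := psiAux_bound
  have hfcont : Continuous f := hf.continuous
  haveI : Nonempty (Fin N) := ⟨⟨0, by omega⟩⟩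
  have h0 : (volume : Measure E) {(0 : E)} = 0 := measure_singleton 0
  have hae : ∀ᵐ x : E, x ≠ (0 : E) := by
    rw [MeasureTheory.ae_iff]
    simpa using h0
  -- measurability facts
  have hφm : AEStronglyMeasurable φ (volume : Measure E) := by
    have h1 : AEStronglyMeasurable φ ((volume : Measure E).restrict {(0 : E)}ᶜ) :=
      hφ.continuousOn.aestronglyMeasurable isClosed_singleton.measurableSet.compl
    have hres : (volume : Measure E).restrict {(0 : E)}ᶜ = volume :=
      Measure.restrict_eq_self_of_ae_mem (by simpa using hae)
    rwa [hres] at h1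
  have hDφm : AEStronglyMeasurable (fun x : E => fderiv ℝ φ x) (volume : Measure E) :=
    (measurable_fderiv ℝ φ).aestronglyMeasurable
  have haesm_app : ∀ (g : E → ℝ) (w : E → E), Continuous w →
      AEStronglyMeasurable (fun x : E => fderiv ℝ g x (w x)) (volume : Measure E) := by
    intro g w hw
    have h1 : Measurable (fun x : E => (fderiv ℝ g x, w x)) :=
      (measurable_fderiv ℝ g).prodMk hw.measurable
    have h2 : Continuous (fun p : (E →L[ℝ] ℝ) × E => p.1 p.2) :=
      isBoundedBilinearMap_apply.continuous
    exact (h2.measurable.comp h1).aestronglyMeasurable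
  have hDφf : AEStronglyMeasurable (fun x : E => fderiv ℝ φ x (f x)) (volume : Measure E) := by
    have h1 : Measurable (fun x : E => (fderiv ℝ φ x, f x)) :=
      (measurable_fderiv ℝ φ).prodMk hfcont.measurable
    have h2 : Continuous (fun p : (E →L[ℝ] E) × E => p.1 p.2) :=
      isBoundedBilinearMap_apply.continuous
    exact (h2.measurable.comp h1).aestronglyMeasurable
  -- workhorse integrability criterion
  obtain ⟨Cf, hCf⟩ := hfc.exists_bound_of_continuous hfcont
  have key_int : ∀ g : E → ℝ, LocallyIntegrable g volume → ∀ h : E → ℝ,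
      AEStronglyMeasurable h (volume : Measure E) →
      (∀ᵐ x : E, ‖h x‖ ≤ g x * ‖f x‖) → Integrable h (volume : Measure E) := by
    intro g hg h hh hbd
    have hdom : Integrable ((tsupport f).indicator fun x => |g x| * Cf) volume := by
      have h1 : IntegrableOn (fun x => |g x| * Cf) (tsupport f) volume :=
        (hg.integrableOn_isCompact hfc).abs.mul_const Cf
      exact h1.integrable_indicator (isClosed_tsupport f).measurableSet
    refine hdom.mono' hh ?_
    filter_upwards [hbd] with x hx
    by_cases hxs : x ∈ tsupport f
    · rw [Set.indicator_of_mem hxs]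
      exact hx.trans (mul_le_mul (le_abs_self _) (hCf x) (norm_nonneg _) (abs_nonneg _))
    · rw [Set.indicator_of_notMem hxs]
      have hfx : f x = 0 := image_eq_zero_of_notMem_tsupport hxs
      simpa [hfx] using hx
  -- integrable building blocks
  have hIφf : Integrable (fun x : E => ‖φ x‖ * ‖f x‖) volume :=
    key_int _ hφ1 _ (hφm.norm.mul hfcont.norm.aestronglyMeasurable)
      (Filter.Eventually.of_forall fun x => by
        rw [Real.norm_eq_abs, abs_of_nonneg (by positivity)])
  have hI2 : Integrable (fun x : E => ‖f x‖ * (‖x‖ * ‖fderiv ℝ φ x‖)) volume :=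
    key_int _ hφ2 _
      (hfcont.norm.aestronglyMeasurable.mul
        (continuous_norm.aestronglyMeasurable.mul hDφm.norm))
      (Filter.Eventually.of_forall fun x => le_of_eq (by
        rw [Real.norm_eq_abs, abs_of_nonneg (by positivity)]; ring))
  set D₀ : E → ℝ :=
    fun x => (8 * M + 1) * (‖φ x‖ * ‖f x‖) + ‖f x‖ * (‖x‖ * ‖fderiv ℝ φ x‖) with hD₀def
  have hD₀ : Integrable D₀ volume := (hIφf.const_mul _).add hI2
  have hF₁ : Integrable (fun x : E => ⟪φ x, f x⟫) volume := by
    refine hIφf.mono' (hφm.inner hfcont.aestronglyMeasurable)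
      (Filter.Eventually.of_forall fun x => ?_)
    rw [Real.norm_eq_abs]; exact abs_real_inner_le_norm _ _
  have hF₂pt : ∀ x : E, |⟪fderiv ℝ φ x (f x), x⟫| ≤ ‖f x‖ * (‖x‖ * ‖fderiv ℝ φ x‖) := by
    intro x
    calc |⟪fderiv ℝ φ x (f x), x⟫| ≤ ‖fderiv ℝ φ x (f x)‖ * ‖x‖ := abs_real_inner_le_norm _ _
      _ ≤ ‖fderiv ℝ φ x‖ * ‖f x‖ * ‖x‖ :=
          mul_le_mul_of_nonneg_right ((fderiv ℝ φ x).le_opNorm _) (norm_nonneg _)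
      _ = ‖f x‖ * (‖x‖ * ‖fderiv ℝ φ x‖) := by ring
  have hF₂ : Integrable (fun x : E => ⟪fderiv ℝ φ x (f x), x⟫) volume := by
    refine hI2.mono' (hDφf.inner aestronglyMeasurable_id)
      (Filter.Eventually.of_forall fun x => ?_)
    rw [Real.norm_eq_abs]; exact hF₂pt x
  -- coordinates
  have hcoord : ∀ (x : E) (j : Fin N), |x j| ≤ ‖x‖ := by
    intro x j
    have h1 : ⟪EuclideanSpace.single j (1 : ℝ), x⟫ = x j := by
      simp [EuclideanSpace.inner_single_left]
    have h2 := abs_real_inner_le_norm (EuclideanSpace.single j (1 : ℝ)) x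
    rwa [h1, EuclideanSpace.norm_single, norm_one, one_mul] at h2
  have hrepr : ∀ v : E, v = ∑ j, v j • EuclideanSpace.single j (1 : ℝ) := by
    intro v
    have := (EuclideanSpace.basisFun (Fin N) ℝ).sum_repr v
    simp only [EuclideanSpace.basisFun_apply, EuclideanSpace.basisFun_repr] at this
    exact this.symm
  -- key vanishing for each ε > 0
  have hkey : ∀ ε : ℝ, 0 < ε → (∫ x : E, fderiv ℝ (gAux N φ ε) x (f x)) = 0 := by
    intro ε hε
    have hgd : Differentiable ℝ (gAux N φ ε) := fun x => gAux_diffAt hφ hε x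
    have hgcont : Continuous (gAux N φ ε) := hgd.continuous
    have hbd : ∀ᵐ x : E, ‖fderiv ℝ (gAux N φ ε) x‖
        ≤ (8 * M + 1) * ‖φ x‖ + ‖x‖ * ‖fderiv ℝ φ x‖ := by
      filter_upwards [hae] with x hx
      exact (gAux_key hφ hM hMb hε hx).1
    have h1j : ∀ j : Fin N, Integrable
        (fun x : E => fderiv ℝ (gAux N φ ε) x (EuclideanSpace.single j (1 : ℝ)) * f x j)
        volume := by
      intro j
      refine hD₀.mono' ((haesm_app _ (fun _ => EuclideanSpace.single j 1) continuous_const).mul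
        ((EuclideanSpace.proj (𝕜 := ℝ) j).continuous.comp hfcont).aestronglyMeasurable) ?_
      filter_upwards [hbd] with x hx
      rw [Real.norm_eq_abs, abs_mul]
      have e1 : |fderiv ℝ (gAux N φ ε) x (EuclideanSpace.single j (1 : ℝ))|
          ≤ ‖fderiv ℝ (gAux N φ ε) x‖ := by
        have h := (fderiv ℝ (gAux N φ ε) x).le_opNorm (EuclideanSpace.single j (1 : ℝ))
        rw [EuclideanSpace.norm_single, norm_one, mul_one] at h
        exact h
      have e3 : |fderiv ℝ (gAux N φ ε) x (EuclideanSpace.single j (1 : ℝ))| * |f x j|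
          ≤ ‖fderiv ℝ (gAux N φ ε) x‖ * ‖f x‖ :=
        mul_le_mul e1 (hcoord (f x) j) (abs_nonneg _) (norm_nonneg _)
      refine e3.trans ?_
      have e4 := mul_le_mul_of_nonneg_right hx (norm_nonneg (f x))
      refine e4.trans (le_of_eq ?_)
      rw [hD₀def]; ring
    have hfj : ∀ j : Fin N, ContDiff ℝ (⊤ : ℕ∞) (fun y : E => f y j) :=
      fun j => (EuclideanSpace.proj (𝕜 := ℝ) j).contDiff.comp hf
    have hfjc : ∀ j : Fin N, HasCompactSupport (fun y : E => f y j) :=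
      fun j => hfc.comp_left (g := fun v : E => v j) rfl
    have h2j : ∀ j : Fin N, Integrable (fun x : E => gAux N φ ε x *
        fderiv ℝ (fun y : E => f y j) x (EuclideanSpace.single j (1 : ℝ))) volume := by
      intro j
      have hfj' : Continuous (fun x : E =>
          fderiv ℝ (fun y : E => f y j) x (EuclideanSpace.single j (1 : ℝ))) :=
        ((hfj j).continuous_fderiv (by simp)).clm_apply continuous_const
      refine (hgcont.mul hfj').integrable_of_hasCompactSupport ?_
      exact ((hfjc j).fderiv_apply ℝ _).mul_left
    have h3j : ∀ j : Fin N, Integrable (fun x : E => gAux N φ ε x * f x j) volume := by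
      intro j
      refine (hgcont.mul
        ((EuclideanSpace.proj (𝕜 := ℝ) j).continuous.comp hfcont)).integrable_of_hasCompactSupport ?_
      exact (hfjc j).mul_left
    have hibp : ∀ j : Fin N,
        (∫ x : E, fderiv ℝ (gAux N φ ε) x (EuclideanSpace.single j (1 : ℝ)) * f x j)
        = - ∫ x : E, gAux N φ ε x *
            fderiv ℝ (fun y : E => f y j) x (EuclideanSpace.single j (1 : ℝ)) := by
      intro j
      have h := integral_mul_fderiv_eq_neg_fderiv_mul_of_integrable (h1j j) (h2j j) (h3j j)
        (fun x _ => hgd x) (fun x _ => (hfj j).differentiable (by simp) x)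
      linarith
    have hpt : ∀ x : E, fderiv ℝ (gAux N φ ε) x (f x)
        = ∑ j, fderiv ℝ (gAux N φ ε) x (EuclideanSpace.single j (1 : ℝ)) * f x j := by
      intro x
      conv_lhs => rw [hrepr (f x)]
      rw [map_sum]
      refine Finset.sum_congr rfl fun j _ => ?_
      rw [_root_.map_smul, smul_eq_mul, mul_comm]
    calc (∫ x : E, fderiv ℝ (gAux N φ ε) x (f x))
        = ∫ x : E, ∑ j, fderiv ℝ (gAux N φ ε) x (EuclideanSpace.single j (1 : ℝ)) * f x j := by
          congr 1; funext x; exact hpt x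
      _ = ∑ j, ∫ x : E, fderiv ℝ (gAux N φ ε) x (EuclideanSpace.single j (1 : ℝ)) * f x j :=
          integral_finset_sum _ fun j _ => h1j j
      _ = ∑ j, - ∫ x : E, gAux N φ ε x *
            fderiv ℝ (fun y : E => f y j) x (EuclideanSpace.single j (1 : ℝ)) :=
          Finset.sum_congr rfl fun j _ => hibp j
      _ = - ∑ j, ∫ x : E, gAux N φ ε x *
            fderiv ℝ (fun y : E => f y j) x (EuclideanSpace.single j (1 : ℝ)) := by
          rw [Finset.sum_neg_distrib]
      _ = - ∫ x : E, ∑ j, gAux N φ ε x *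
            fderiv ℝ (fun y : E => f y j) x (EuclideanSpace.single j (1 : ℝ)) := by
          rw [integral_finset_sum _ fun j _ => h2j j]
      _ = - ∫ x : E, gAux N φ ε x * diverg N f x := by
          congr 1
          refine integral_congr_ae (Filter.Eventually.of_forall fun x => ?_)
          simp only [diverg, Finset.mul_sum]
      _ = 0 := by simp [hdiv]
  -- pass to the limit ε = 1/(n+1)
  have hεn : ∀ n : ℕ, (0 : ℝ) < ((n : ℝ) + 1)⁻¹ := fun n => by positivity
  have hFm : ∀ n : ℕ, AEStronglyMeasurable
      (fun x : E => fderiv ℝ (gAux N φ ((n : ℝ) + 1)⁻¹) x (f x)) (volume : Measure E) :=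
    fun n => haesm_app _ f hfcont
  have hFb : ∀ n : ℕ, ∀ᵐ x : E,
      ‖fderiv ℝ (gAux N φ ((n : ℝ) + 1)⁻¹) x (f x)‖ ≤ D₀ x := by
    intro n
    filter_upwards [hae] with x hx
    have h1 := (gAux_key hφ hM hMb (hεn n) hx).1
    have e1 : ‖fderiv ℝ (gAux N φ ((n : ℝ) + 1)⁻¹) x (f x)‖
        ≤ ‖fderiv ℝ (gAux N φ ((n : ℝ) + 1)⁻¹) x‖ * ‖f x‖ :=
      (fderiv ℝ (gAux N φ ((n : ℝ) + 1)⁻¹) x).le_opNorm _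
    refine e1.trans ?_
    have e2 := mul_le_mul_of_nonneg_right h1 (norm_nonneg (f x))
    refine e2.trans (le_of_eq ?_)
    rw [hD₀def]; ring
  have hlim : ∀ᵐ x : E, Filter.Tendsto
      (fun n : ℕ => fderiv ℝ (gAux N φ ((n : ℝ) + 1)⁻¹) x (f x)) Filter.atTop
      (nhds (⟪φ x, f x⟫ + ⟪fderiv ℝ φ x (f x), x⟫)) := by
    filter_upwards [hae] with x hx
    have ht0 : Filter.Tendsto (fun n : ℕ => 2 * ((n : ℝ) + 1)⁻¹) Filter.atTop (nhds 0) := by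
      have h1 : Filter.Tendsto (fun n : ℕ => ((n : ℝ) + 1)⁻¹) Filter.atTop (nhds 0) := by
        simpa [one_div] using tendsto_one_div_add_atTop_nhds_zero_nat (𝕜 := ℝ)
      simpa using h1.const_mul 2
    have hev : ∀ᶠ n : ℕ in Filter.atTop, 2 * ((n : ℝ) + 1)⁻¹ < ‖x‖ :=
      ht0.eventually_lt_const (norm_pos_iff.mpr hx)
    refine Filter.Tendsto.congr' ?_ tendsto_const_nhds
    filter_upwards [hev] with n hn
    exact ((gAux_key hφ hM hMb (hεn n) hx).2 hn (f x)).symm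
  have htend := tendsto_integral_of_dominated_convergence D₀ hFm hD₀ hFb hlim
  have hzero : (fun n : ℕ => ∫ x : E, fderiv ℝ (gAux N φ ((n : ℝ) + 1)⁻¹) x (f x))
      = fun _ => (0 : ℝ) := funext fun n => hkey _ (hεn n)
  rw [hzero] at htend
  have hsum0 : (∫ x : E, (⟪φ x, f x⟫ + ⟪fderiv ℝ φ x (f x), x⟫)) = 0 :=
    tendsto_nhds_unique htend tendsto_const_nhds
  rw [integral_add hF₁ hF₂] at hsum0
  have hneg : (∫ x : E, ⟪φ x, f x⟫) = - ∫ x : E, ⟪fderiv ℝ φ x (f x), x⟫ := by linarith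
  rw [one_mul]
  calc |∫ y : E, ⟪φ y, f y⟫| = |∫ y : E, ⟪fderiv ℝ φ y (f y), y⟫| := by rw [hneg, abs_neg]
    _ ≤ ∫ y : E, |⟪fderiv ℝ φ y (f y), y⟫| := by
        simpa [Real.norm_eq_abs] using
          norm_integral_le_integral_norm (fun y : E => ⟪fderiv ℝ φ y (f y), y⟫)
    _ ≤ ∫ y : E, ‖f y‖ * (‖y‖ * ‖fderiv ℝ φ y‖) := integral_mono hF₂.abs hI2 fun y => hF₂pt y


end Main

/-- Cocanceling duality estimate (Lemma 3.1 of the paper) for the divergence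
operator: `|∫ φ·f| ≤ C ∫ |f(y)| |y| |Dφ(y)| dy` for divergence-free `f`. -/
theorem cocanceling_duality_divergence (N : ℕ) (hN : 2 ≤ N) :
    ∃ C : ℝ, 0 < C ∧
      ∀ φ : EuclideanSpace ℝ (Fin N) → EuclideanSpace ℝ (Fin N),
        ContDiffOn ℝ 1 φ {(0 : EuclideanSpace ℝ (Fin N))}ᶜ →
        LocallyIntegrable (fun x => ‖φ x‖) →
        LocallyIntegrable (fun x => ‖x‖ * ‖fderiv ℝ φ x‖) →
        ∀ f : EuclideanSpace ℝ (Fin N) → EuclideanSpace ℝ (Fin N),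
          ContDiff ℝ (⊤ : ℕ∞) f → HasCompactSupport f →
          (∀ x, diverg N f x = 0) →
          |(∫ y, (inner ℝ (φ y) (f y) : ℝ))|
            ≤ C * ∫ y, ‖f y‖ * (‖y‖ * ‖fderiv ℝ φ y‖) :=
  ⟨1, one_pos, fun φ hφ h1 h2 f hf hfc hdiv => main_est hN hφ h1 h2 hf hfc hdiv⟩
end

section
/- Let N ≥ 1, 0 < ℓ < N, and set K(x) = |x|^{ℓ−N}. Let ψ be a Schwartz function on ℝ^N with ∫_{ℝ^N} ψ(x) dx = 1, and for λ ≥ 1 define p_λ(x) := λ^N ψ(λx) − λ^{−N} ψ(x/λ). Then for every x ∈ ℝ^N with x ≠ 0, the convolution (K * p_λ)(x) = ∫_{ℝ^N} K(x−y) p_λ(y) dy converges to K(x) as λ → ∞. -/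
/-! Substituting `z = λ y` and `y = λ w`, the integral becomes
`∫ K (x - λ⁻¹ • z) ψ z dz - ∫ K (x - λ • w) ψ w dw` with `K v = ‖v‖ ^ s`, `-N < s < 0`.
As `K` is integrable near `0` and bounded away from it, `K * ψ` is bounded; by homogeneity the
second integral is `λ ^ s (K * ψ)(λ⁻¹ • x) = O(λ ^ s)`. For the first, split `K (x - ·)` at
distance `‖x‖ / 2` from `x`. The outer part is bounded and continuous at `0`, so dominated
convergence gives `K x * ∫ ψ`. The inner part is integrable and vanishes on the ball of radius
`‖x‖ / 2` about `0`, outside of which Schwartz decay makes the dilates `λ ^ N ψ (λ • y)`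
uniformly `O(1 / λ)`. -/

open MeasureTheory Real Filter Metric Set Module Topology
open scoped SchwartzMap

variable {E : Type*} [NormedAddCommGroup E]

theorem norm_rpow_mul_le_indicator_add {s : ℝ} (hs : s ≤ 0) (v : E) {a C : ℝ} (ha : ‖a‖ ≤ C) :
    ‖‖v‖ ^ s * a‖ ≤ C * (closedBall (0 : E) 1).indicator (fun v => ‖v‖ ^ s) v + ‖a‖ := by
  have hK : 0 ≤ ‖v‖ ^ s := rpow_nonneg (norm_nonneg v) s
  rw [norm_mul, norm_of_nonneg hK]
  by_cases hv : v ∈ closedBall (0 : E) 1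
  · rw [indicator_of_mem hv, mul_comm C]
    nlinarith [norm_nonneg a]
  · have h1 : 1 ≤ ‖v‖ := by simpa using (not_le.1 (mt mem_closedBall_zero_iff.2 hv)).le
    rw [indicator_of_notMem hv, mul_zero, zero_add]
    exact mul_le_of_le_one_left (norm_nonneg a) (rpow_le_one_of_one_le_of_nonpos h1 hs)

variable [NormedSpace ℝ E]

theorem pow_mul_norm_comp_smul_le (ψ : 𝓢(E, ℝ)) (n : ℕ) {c r : ℝ} (hc : 0 < c) (hr : 0 < r)
    {y : E} (hy : r ≤ ‖y‖) :
    c ^ n * ‖ψ (c • y)‖ ≤ SchwartzMap.seminorm ℝ (n + 1) 0 ψ / r ^ (n + 1) * c⁻¹ := by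
  have hdecay := SchwartzMap.norm_pow_mul_le_seminorm ℝ ψ (n + 1) (c • y)
  have hcy : c * r ≤ ‖c • y‖ := by
    rw [norm_smul, norm_of_nonneg hc.le]
    exact mul_le_mul_of_nonneg_left hy hc.le
  calc c ^ n * ‖ψ (c • y)‖ = (c * r) ^ (n + 1) * ‖ψ (c • y)‖ / (r ^ (n + 1) * c) := by
        field_simp
        ring
    _ ≤ ‖c • y‖ ^ (n + 1) * ‖ψ (c • y)‖ / (r ^ (n + 1) * c) := by gcongr
    _ ≤ SchwartzMap.seminorm ℝ (n + 1) 0 ψ / (r ^ (n + 1) * c) := by gcongr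
    _ = _ := by rw [div_mul_eq_div_div, div_eq_mul_inv]

variable [MeasurableSpace E] [BorelSpace E] {μ : Measure E}

theorem tendsto_integral_comp_inv_smul_mul_of_bounded {f : E → ℝ} (hfm : Measurable f) {C : ℝ}
    (hfC : ∀ v, ‖f v‖ ≤ C) (hf0 : ContinuousAt f 0) {g : E → ℝ} (hg : Integrable g μ) :
    Tendsto (fun c : ℝ => ∫ z, f (c⁻¹ • z) * g z ∂μ) atTop (𝓝 (f 0 * ∫ z, g z ∂μ)) := by
  rw [← integral_const_mul]
  refine tendsto_integral_filter_of_dominated_convergence (fun z => C * ‖g z‖)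
    (Eventually.of_forall fun c : ℝ =>
      (hfm.comp (measurable_const_smul c⁻¹)).aestronglyMeasurable.mul hg.1)
    (Eventually.of_forall fun c => Eventually.of_forall fun z => ?_) (hg.norm.const_mul C)
    (Eventually.of_forall fun z => ?_)
  · rw [norm_mul]
    exact mul_le_mul_of_nonneg_right (hfC _) (norm_nonneg _)
  · have h : Tendsto (fun c : ℝ => c⁻¹ • z) atTop (𝓝 0) := by
      simpa using (tendsto_inv_atTop_zero (𝕜 := ℝ)).smul_const z
    exact (hf0.tendsto.comp h).mul_const (g z)

variable [FiniteDimensional ℝ E] [μ.IsAddHaarMeasure]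

theorem integral_mul_pow_mul_comp_smul (f g : E → ℝ) {c : ℝ} (hc : 0 < c) :
    ∫ y, f y * (c ^ finrank ℝ E * g (c • y)) ∂μ = ∫ z, f (c⁻¹ • z) * g z ∂μ := by
  have h := Measure.integral_comp_smul μ (fun z => f (c⁻¹ • z) * g z) c
  simp only [inv_smul_smul₀ hc.ne', smul_eq_mul] at h
  rw [abs_of_pos (inv_pos.2 (pow_pos hc _))] at h
  simp_rw [mul_left_comm (f _), integral_const_mul, h, mul_inv_cancel_left₀ (pow_pos hc _).ne']

theorem integrable_indicator_closedBall_norm_rpow {s : ℝ} (hs0 : s ≤ 0)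
    (hsd : -(finrank ℝ E : ℝ) < s) (r : ℝ) :
    Integrable ((closedBall (0 : E) r).indicator fun v => ‖v‖ ^ s) μ := by
  have hd : 1 ≤ finrank ℝ E := Nat.cast_pos.1 (by linarith : (0 : ℝ) < finrank ℝ E)
  have hloc : LocallyIntegrable (fun v : E => ‖v‖ ^ s) μ :=
    locallyIntegrable_of_norm_le_rpow (C := 1) (α := -s) hd (by linarith)
      (Eventually.of_forall fun v => by simp [abs_of_nonneg (rpow_nonneg (norm_nonneg v) s)])
      (by fun_prop : Measurable fun v : E => ‖v‖ ^ s).aestronglyMeasurable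
  exact (hloc.integrableOn_isCompact (isCompact_closedBall 0 r)).integrable_indicator
    measurableSet_closedBall

theorem integrable_norm_sub_rpow_mul {s : ℝ} (hs0 : s ≤ 0)
    (hsd : -(finrank ℝ E : ℝ) < s) (u : E) {g : E → ℝ} (hg : Integrable g μ) {C : ℝ}
    (hgC : ∀ w, ‖g w‖ ≤ C) :
    Integrable (fun w => ‖u - w‖ ^ s * g w) μ :=
  (((integrable_indicator_closedBall_norm_rpow hs0 hsd 1).comp_sub_left u).const_mul C
    |>.add hg.norm).mono'
    ((by fun_prop : Measurable fun w : E => ‖u - w‖ ^ s).aestronglyMeasurable.mul hg.1)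
    (Eventually.of_forall fun w => norm_rpow_mul_le_indicator_add hs0 (u - w) (hgC w))

theorem exists_forall_norm_integral_norm_sub_rpow_mul_le {s : ℝ}
    (hs0 : s ≤ 0) (hsd : -(finrank ℝ E : ℝ) < s) {g : E → ℝ} (hg : Integrable g μ) {C : ℝ}
    (hgC : ∀ w, ‖g w‖ ≤ C) :
    ∃ M, ∀ u : E, ‖∫ w, ‖u - w‖ ^ s * g w ∂μ‖ ≤ M := by
  have hK := integrable_indicator_closedBall_norm_rpow (μ := μ) hs0 hsd 1
  refine ⟨C * ∫ v, (closedBall (0 : E) 1).indicator (fun v => ‖v‖ ^ s) v ∂μ + ∫ w, ‖g w‖ ∂μ,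
    fun u => ?_⟩
  calc ‖∫ w, ‖u - w‖ ^ s * g w ∂μ‖
      ≤ ∫ w, (C * (closedBall (0 : E) 1).indicator (fun v => ‖v‖ ^ s) (u - w) + ‖g w‖) ∂μ :=
        norm_integral_le_of_norm_le ((hK.comp_sub_left u).const_mul C |>.add hg.norm)
          (Eventually.of_forall fun w => norm_rpow_mul_le_indicator_add hs0 (u - w) (hgC w))
    _ = _ := by
      rw [integral_add ((hK.comp_sub_left u).const_mul C) hg.norm, integral_const_mul,
        integral_sub_left_eq_self]

theorem tendsto_integral_norm_sub_smul_rpow_mul {s : ℝ} (hs0 : s < 0)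
    (hsd : -(finrank ℝ E : ℝ) < s) (x : E) {g : E → ℝ} (hg : Integrable g μ) {C : ℝ}
    (hgC : ∀ w, ‖g w‖ ≤ C) :
    Tendsto (fun c : ℝ => ∫ w, ‖x - c • w‖ ^ s * g w ∂μ) atTop (𝓝 0) := by
  obtain ⟨M, hM⟩ := exists_forall_norm_integral_norm_sub_rpow_mul_le hs0.le hsd hg hgC
  have hlim : Tendsto (fun c : ℝ => c ^ s * M) atTop (𝓝 0) := by
    simpa using (tendsto_rpow_neg_atTop (neg_pos.2 hs0)).mul_const M
  refine squeeze_zero_norm' ?_ hlim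
  filter_upwards [eventually_gt_atTop 0] with c hc
  have hscale : ∀ w : E, ‖x - c • w‖ ^ s = c ^ s * ‖c⁻¹ • x - w‖ ^ s := fun w => by
    rw [← mul_rpow hc.le (norm_nonneg _), ← norm_smul_of_nonneg hc.le, smul_sub,
      smul_inv_smul₀ hc.ne']
  simp_rw [hscale, mul_assoc, integral_const_mul, norm_mul, norm_of_nonneg (rpow_nonneg hc.le s)]
  exact mul_le_mul_of_nonneg_left (hM _) (rpow_nonneg hc.le s)

theorem tendsto_integral_comp_inv_smul_mul_of_eq_zero_near (ψ : 𝓢(E, ℝ)) {f : E → ℝ}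
    (hf : Integrable f μ) {r : ℝ} (hr : 0 < r) (hf0 : ∀ y, ‖y‖ < r → f y = 0) :
    Tendsto (fun c : ℝ => ∫ z, f (c⁻¹ • z) * ψ z ∂μ) atTop (𝓝 0) := by
  set D := SchwartzMap.seminorm ℝ (finrank ℝ E + 1) 0 ψ / r ^ (finrank ℝ E + 1)
  have hlim : Tendsto (fun c : ℝ => (∫ y, ‖f y‖ ∂μ) * (D * c⁻¹)) atTop (𝓝 0) := by
    simpa [mul_assoc] using tendsto_inv_atTop_zero.const_mul ((∫ y, ‖f y‖ ∂μ) * D)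
  refine squeeze_zero_norm' ?_ hlim
  filter_upwards [eventually_gt_atTop 0] with c hc
  rw [← integral_mul_pow_mul_comp_smul f ψ hc, ← integral_mul_const]
  refine norm_integral_le_of_norm_le (hf.norm.mul_const _) (Eventually.of_forall fun y => ?_)
  rw [norm_mul, norm_mul, norm_of_nonneg (pow_pos hc _).le]
  rcases lt_or_ge ‖y‖ r with hy | hy
  · simp [hf0 y hy]
  · exact mul_le_mul_of_nonneg_left (pow_mul_norm_comp_smul_le ψ _ hc hr hy) (norm_nonneg _)

theorem tendsto_integral_comp_inv_smul_mul_of_add (ψ : 𝓢(E, ℝ)) {f₁ f₂ : E → ℝ}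
    (hf₁ : Integrable f₁ μ) {r : ℝ} (hr : 0 < r) (hf₁0 : ∀ y, ‖y‖ < r → f₁ y = 0)
    (hf₂m : Measurable f₂) {C : ℝ} (hf₂C : ∀ v, ‖f₂ v‖ ≤ C) (hf₂0 : ContinuousAt f₂ 0) :
    Tendsto (fun c : ℝ => ∫ z, (f₁ (c⁻¹ • z) + f₂ (c⁻¹ • z)) * ψ z ∂μ) atTop
      (𝓝 (f₂ 0 * ∫ z, ψ z ∂μ)) := by
  have hlim := (tendsto_integral_comp_inv_smul_mul_of_eq_zero_near ψ hf₁ hr hf₁0).add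
    (tendsto_integral_comp_inv_smul_mul_of_bounded hf₂m hf₂C hf₂0 (ψ.integrable (μ := μ)))
  rw [zero_add] at hlim
  refine hlim.congr' ?_
  filter_upwards [eventually_gt_atTop 0] with c hc
  have h₁ : Integrable (fun z => f₁ (c⁻¹ • z) * ψ z) μ :=
    (hf₁.comp_smul (inv_ne_zero hc.ne')).mul_bdd ψ.continuous.aestronglyMeasurable
      (Eventually.of_forall (SchwartzMap.norm_le_seminorm ℝ ψ))
  have h₂ : Integrable (fun z => f₂ (c⁻¹ • z) * ψ z) μ :=
    ψ.integrable.bdd_mul (hf₂m.comp (measurable_const_smul c⁻¹)).aestronglyMeasurable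
      (Eventually.of_forall fun z => hf₂C _)
  simp_rw [add_mul]
  exact (integral_add h₁ h₂).symm

theorem tendsto_integral_norm_sub_inv_smul_rpow_mul {s : ℝ} (hs0 : s ≤ 0)
    (hsd : -(finrank ℝ E : ℝ) < s) {x : E} (hx : x ≠ 0) (ψ : 𝓢(E, ℝ)) :
    Tendsto (fun c : ℝ => ∫ z, ‖x - c⁻¹ • z‖ ^ s * ψ z ∂μ) atTop
      (𝓝 (‖x‖ ^ s * ∫ z, ψ z ∂μ)) := by
  set r := ‖x‖ / 2 with hr_def
  have hr : 0 < r := by have := norm_pos_iff.2 hx; positivity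
  set B := closedBall (0 : E) r
  set K : E → ℝ := fun v => ‖v‖ ^ s
  have hnear0 : ∀ v : E, ‖v‖ < r → B.indicator K (x - v) = 0 := fun v hv =>
    indicator_of_notMem (by
      rw [mem_closedBall_zero_iff, not_le]
      linarith [norm_sub_norm_le x v, hr_def]) _
  have hfar_bdd : ∀ v, ‖Bᶜ.indicator K (x - v)‖ ≤ r ^ s := fun v => by
    by_cases hv : x - v ∈ Bᶜ
    · rw [indicator_of_mem hv, norm_of_nonneg (rpow_nonneg (norm_nonneg _) _)]
      have hrv : r < ‖x - v‖ := by simpa [B] using hv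
      exact rpow_le_rpow_of_nonpos hr hrv.le hs0
    · rw [indicator_of_notMem hv, norm_zero]
      positivity
  have hfar_near : (fun v => Bᶜ.indicator K (x - v)) =ᶠ[𝓝 0] fun v => ‖x - v‖ ^ s := by
    have hmem : (fun v : E => x - v) ⁻¹' Bᶜ ∈ 𝓝 0 :=
      (isClosed_closedBall.isOpen_compl.preimage (by fun_prop)).mem_nhds
        (by simp [r, norm_pos_iff.2 hx])
    filter_upwards [hmem] with v hv
    exact indicator_of_mem (show x - v ∈ Bᶜ from hv) K
  have hfar_cont : ContinuousAt (fun v => Bᶜ.indicator K (x - v)) 0 :=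
    ContinuousAt.congr (((continuous_const.sub continuous_id).norm.continuousAt).rpow_const
      (Or.inl (by simpa using hx))) hfar_near.symm
  have h : Tendsto (fun c : ℝ => ∫ z, (B.indicator K (x - c⁻¹ • z) +
      Bᶜ.indicator K (x - c⁻¹ • z)) * ψ z ∂μ) atTop
        (𝓝 (Bᶜ.indicator K (x - 0) * ∫ z, ψ z ∂μ)) :=
    tendsto_integral_comp_inv_smul_mul_of_add ψ
      ((integrable_indicator_closedBall_norm_rpow hs0 hsd r).comp_sub_left x) hr hnear0
      (((by fun_prop : Measurable K).indicator measurableSet_closedBall.compl).comp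
        (by fun_prop)) hfar_bdd hfar_cont
  rw [hfar_near.eq_of_nhds, sub_zero] at h
  simpa only [indicator_self_add_compl_apply] using h

theorem tendsto_integral_norm_sub_rpow_mul_dilation_sub {s : ℝ}
    (hs0 : s < 0) (hsd : -(finrank ℝ E : ℝ) < s) {x : E} (hx : x ≠ 0) (ψ : 𝓢(E, ℝ)) :
    Tendsto (fun c : ℝ => ∫ y, ‖x - y‖ ^ s *
        (c ^ finrank ℝ E * ψ (c • y) - (c ^ finrank ℝ E)⁻¹ * ψ (c⁻¹ • y)) ∂μ) atTop
      (𝓝 (‖x‖ ^ s * ∫ z, ψ z ∂μ)) := by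
  have hdil : ∀ c : ℝ, c ≠ 0 →
      Integrable (fun y => ‖x - y‖ ^ s * (c ^ finrank ℝ E * ψ (c • y))) μ := fun c hc =>
    integrable_norm_sub_rpow_mul hs0.le hsd x (((ψ.integrable (μ := μ)).comp_smul hc).const_mul _)
      (C := ‖c ^ finrank ℝ E‖ * SchwartzMap.seminorm ℝ 0 0 ψ) fun y => by
        rw [norm_mul]
        gcongr
        exact SchwartzMap.norm_le_seminorm ℝ ψ _
  have hlim := (tendsto_integral_norm_sub_inv_smul_rpow_mul (μ := μ) hs0.le hsd hx ψ).sub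
    (tendsto_integral_norm_sub_smul_rpow_mul hs0 hsd x (ψ.integrable (μ := μ))
      (SchwartzMap.norm_le_seminorm ℝ ψ))
  rw [sub_zero] at hlim
  refine hlim.congr' ?_
  filter_upwards [eventually_gt_atTop 0] with c hc
  simp_rw [← inv_pow, mul_sub]
  rw [integral_sub (hdil c hc.ne') (hdil c⁻¹ (inv_ne_zero hc.ne')),
    integral_mul_pow_mul_comp_smul (fun y => ‖x - y‖ ^ s) ψ hc,
    integral_mul_pow_mul_comp_smul (fun y => ‖x - y‖ ^ s) ψ (inv_pos.2 hc), inv_inv]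

theorem convolution_approx_tendsto_general (N : ℕ) (ℓ : ℝ)
    (hℓ0 : 0 < ℓ) (hℓN : ℓ < N)
    (ψ : SchwartzMap (EuclideanSpace ℝ (Fin N)) ℝ)
    (hψ : ∫ x, ψ x = 1)
    (x : EuclideanSpace ℝ (Fin N)) (hx : x ≠ 0) :
    Tendsto (fun lam : ℝ =>
        ∫ y, ‖x - y‖ ^ (ℓ - (N : ℝ)) *
          (lam ^ (N : ℕ) * ψ (lam • y) - (lam ^ (N : ℕ))⁻¹ * ψ (lam⁻¹ • y)))
      atTop (nhds (‖x‖ ^ (ℓ - (N : ℝ)))) := by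
  have hd : finrank ℝ (EuclideanSpace ℝ (Fin N)) = N := finrank_euclideanSpace_fin
  have h := tendsto_integral_norm_sub_rpow_mul_dilation_sub (μ := volume) (s := ℓ - N)
    (by linarith) (by rw [hd]; linarith) hx ψ
  rwa [hd, hψ, mul_one] at h

/-- The Claim of Section 4: `(K * p_λ)(x) → K(x)` as `λ → ∞` for `x ≠ 0`, where
`K(x) = |x|^{ℓ-N}` and `p_λ(x) = λ^N ψ(λx) - λ^{-N} ψ(x/λ)` with `∫ ψ = 1`. -/
theorem convolution_approx_tendsto (N : ℕ) (hN : 1 ≤ N) (ℓ : ℝ)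
    (hℓ0 : 0 < ℓ) (hℓN : ℓ < N)
    (ψ : SchwartzMap (EuclideanSpace ℝ (Fin N)) ℝ)
    (hψ : ∫ x, ψ x = 1)
    (x : EuclideanSpace ℝ (Fin N)) (hx : x ≠ 0) :
    Tendsto (fun lam : ℝ =>
        ∫ y, ‖x - y‖ ^ (ℓ - (N : ℝ)) *
          (lam ^ (N : ℕ) * ψ (lam • y) - (lam ^ (N : ℕ))⁻¹ * ψ (lam⁻¹ • y)))
      atTop (nhds (‖x‖ ^ (ℓ - (N : ℝ)))) :=
  convolution_approx_tendsto_general N ℓ hℓ0 hℓN ψ hψ x hx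
end

section
/- Let N ≥ 1, 0 < ℓ < N, N < θ < N + 1, and set K(x) = |x|^{ℓ−N}. Then there exists a constant C > 0 such that for every x ∈ ℝ^N with x ≠ 0, ∫_{ℝ^N} |K(x−y) − K(x)| |y|^{−θ} dy ≤ C |x|^{ℓ−θ}. -/
/-!
Scaling `y ↦ ‖x‖ • y` reduces the estimate to `‖x‖ = 1`, the exponent of homogeneity being
`N + (ℓ - N) - θ = ℓ - θ`, so it suffices to bound the integral uniformly over unit vectors `u`.
On `‖y‖ < 1/2` the mean value theorem gives `|‖u - y‖ ^ a - 1| ≲ ‖y‖`, and `‖y‖ ^ (1 - θ)` is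
integrable near `0` because `θ < N + 1`. On `‖y‖ ≥ 1/2` we use
`|‖u - y‖ ^ a - 1| ≤ ‖u - y‖ ^ a + 1`: the singularity `‖u - y‖ ^ a` at `y = u` is integrable
because `a = ℓ - N > -N`, and `‖y‖ ^ (-θ)` is integrable at infinity because `θ > N`.
-/

open MeasureTheory Real Metric Set Module
open scoped ENNReal

lemma abs_rpow_sub_rpow_le_of_nonpos {a c s t : ℝ} (ha : a ≤ 0) (hc : 0 < c) (hs : c ≤ s)
    (ht : c ≤ t) : |s ^ a - t ^ a| ≤ |a| * c ^ (a - 1) * |s - t| := by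
  have hderiv : ∀ x ∈ Ici c, HasDerivWithinAt (· ^ a) (a * x ^ (a - 1)) (Ici c) x :=
    fun x hx => (hasDerivAt_rpow_const (Or.inl (hc.trans_le hx).ne')).hasDerivWithinAt
  have hbound : ∀ x ∈ Ici c, ‖a * x ^ (a - 1)‖ ≤ |a| * c ^ (a - 1) := fun x hx => by
    rw [norm_eq_abs, abs_mul, abs_of_nonneg (rpow_nonneg (hc.le.trans hx) _)]
    exact mul_le_mul_of_nonneg_left (rpow_le_rpow_of_nonpos hc hx (by linarith)) (abs_nonneg a)
  simpa [norm_eq_abs] using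
    (convex_Ici c).norm_image_sub_le_of_norm_hasDerivWithin_le hderiv hbound ht hs

section Pointwise

variable {E : Type*} [NormedAddCommGroup E]

lemma kernelDiff_le_of_norm_lt_half {a θ : ℝ} (ha : a ≤ 0) {u y : E} (hu : ‖u‖ = 1)
    (hy : ‖y‖ < 1 / 2) :
    |‖u - y‖ ^ a - ‖u‖ ^ a| * ‖y‖ ^ (-θ) ≤ |a| * (1 / 2) ^ (a - 1) * ‖y‖ ^ (1 - θ) := by
  rcases eq_or_ne y 0 with rfl | hy0
  · simp only [sub_zero, sub_self, abs_zero, zero_mul]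
    positivity
  have hlip : |‖u - y‖ ^ a - ‖u‖ ^ a| ≤ |a| * (1 / 2) ^ (a - 1) * ‖y‖ := by
    refine (abs_rpow_sub_rpow_le_of_nonpos ha one_half_pos ?_ (by rw [hu]; norm_num)).trans ?_
    · linarith [norm_sub_norm_le u y]
    · gcongr
      simpa using abs_norm_sub_norm_le (u - y) u
  calc |‖u - y‖ ^ a - ‖u‖ ^ a| * ‖y‖ ^ (-θ)
      ≤ |a| * (1 / 2) ^ (a - 1) * ‖y‖ * ‖y‖ ^ (-θ) := by gcongr
    _ = |a| * (1 / 2) ^ (a - 1) * ‖y‖ ^ (1 - θ) := by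
      rw [mul_assoc, show 1 - θ = 1 + -θ by ring, rpow_add (norm_pos_iff.2 hy0), rpow_one]

lemma kernelDiff_le_of_half_le_norm {a θ : ℝ} (ha : a ≤ 0) (hθ : 0 ≤ θ) {u y : E}
    (hu : ‖u‖ = 1) (hy : 1 / 2 ≤ ‖y‖) :
    ENNReal.ofReal (|‖u - y‖ ^ a - ‖u‖ ^ a| * ‖y‖ ^ (-θ)) ≤
      ENNReal.ofReal (2 ^ θ) * (ball 0 1).indicator (fun w => ENNReal.ofReal (‖w‖ ^ a)) (u - y)
        + ENNReal.ofReal (‖y‖ ^ (-θ)) := by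
  have hA : 0 ≤ ‖u - y‖ ^ a := by positivity
  have hY : 0 ≤ ‖y‖ ^ (-θ) := by positivity
  have hY2 : ‖y‖ ^ (-θ) ≤ 2 ^ θ := by
    simpa [rpow_neg, inv_rpow] using rpow_le_rpow_of_nonpos one_half_pos hy (neg_nonpos.2 hθ)
  rw [hu, one_rpow]
  by_cases hball : u - y ∈ ball 0 1
  · rw [indicator_of_mem hball, ← ENNReal.ofReal_mul (by positivity),
      ← ENNReal.ofReal_add (by positivity) hY]
    refine ENNReal.ofReal_le_ofReal ?_
    have : |‖u - y‖ ^ a - 1| ≤ ‖u - y‖ ^ a + 1 := abs_le.2 ⟨by linarith, by linarith⟩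
    nlinarith
  · have hA1 : ‖u - y‖ ^ a ≤ 1 := rpow_le_one_of_one_le_of_nonpos (by simpa using hball) ha
    rw [indicator_of_notMem hball, mul_zero, zero_add]
    refine ENNReal.ofReal_le_ofReal (mul_le_of_le_one_left hY ?_)
    exact abs_le.2 ⟨by linarith, by linarith⟩

end Pointwise

section Measure

variable {E : Type*} [NormedAddCommGroup E] [MeasurableSpace E] (μ : Measure E)

/-- For `a = ℓ - N` this is `∫ |K(x - y) - K(x)| |y|^{-θ} dy` with `K = |·|^{ℓ-N}`. -/
noncomputable def kernelDiffIntegral (a θ : ℝ) (x : E) : ℝ≥0∞ :=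
  ∫⁻ y, ENNReal.ofReal (|‖x - y‖ ^ a - ‖x‖ ^ a| * ‖y‖ ^ (-θ)) ∂μ

lemma setLIntegral_ball_half_kernelDiff_le [OpensMeasurableSpace E] {a θ : ℝ} (ha : a ≤ 0)
    {u : E} (hu : ‖u‖ = 1) :
    ∫⁻ y in ball 0 (1 / 2), ENNReal.ofReal (|‖u - y‖ ^ a - ‖u‖ ^ a| * ‖y‖ ^ (-θ)) ∂μ ≤
      ENNReal.ofReal (|a| * (1 / 2) ^ (a - 1)) *
        ∫⁻ y in ball 0 (1 / 2), ENNReal.ofReal (‖y‖ ^ (1 - θ)) ∂μ := by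
  rw [← lintegral_const_mul' _ _ ENNReal.ofReal_ne_top]
  refine setLIntegral_mono' measurableSet_ball fun y hy => ?_
  rw [← ENNReal.ofReal_mul (by positivity)]
  exact ENNReal.ofReal_le_ofReal (kernelDiff_le_of_norm_lt_half ha hu (mem_ball_zero_iff.1 hy))

end Measure

section HaarMeasure

variable {E : Type*} [NormedAddCommGroup E] [NormedSpace ℝ E] [FiniteDimensional ℝ E]
  [MeasurableSpace E] [BorelSpace E] (μ : Measure E) [μ.IsAddHaarMeasure]

lemma lintegral_rpow_norm_ball_lt_top [Nontrivial E] {p : ℝ} (hp : -(finrank ℝ E : ℝ) < p)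
    (r : ℝ) : ∫⁻ x in ball 0 r, ENNReal.ofReal (‖x‖ ^ p) ∂μ < ∞ := by
  refine IntegrableOn.setLIntegral_lt_top (integrableOn_ball_of_norm_le_rpow (C := 1) (α := -p)
    finrank_pos (by linarith) (.of_forall fun x => ?_)
    (measurable_norm.pow_const p).aestronglyMeasurable)
  rw [one_mul, neg_neg, norm_of_nonneg (by positivity)]

lemma lintegral_rpow_norm_compl_ball_lt_top {p : ℝ} (hp : p < -(finrank ℝ E : ℝ)) {r : ℝ}
    (hr : 0 < r) : ∫⁻ x in (ball 0 r)ᶜ, ENNReal.ofReal (‖x‖ ^ p) ∂μ < ∞ := by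
  have hp0 : p < 0 := hp.trans_le (by simp)
  have hdom := (integrable_one_add_norm (μ := μ) (r := -p) (by linarith)).const_mul
    ((1 + r⁻¹) ^ (-p))
  refine IntegrableOn.setLIntegral_lt_top (hdom.integrableOn.mono'
    (measurable_norm.pow_const p).aestronglyMeasurable
    ((ae_restrict_iff' measurableSet_ball.compl).2 (.of_forall fun x hx => ?_)))
  have hrx : r ≤ ‖x‖ := by simpa using hx
  have hx0 : 0 < ‖x‖ := hr.trans_le hrx
  have hle : 1 + ‖x‖ ≤ (1 + r⁻¹) * ‖x‖ := by
    rw [add_mul, one_mul, add_comm]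
    gcongr
    rw [inv_mul_eq_div, le_div_iff₀ hr, one_mul]
    exact hrx
  calc ‖‖x‖ ^ p‖ = (1 + r⁻¹) ^ (-p) * ((1 + r⁻¹) * ‖x‖) ^ p := by
        rw [norm_of_nonneg (by positivity), mul_rpow (by positivity) hx0.le, ← mul_assoc,
          ← rpow_add (by positivity), neg_add_cancel, rpow_zero, one_mul]
    _ ≤ (1 + r⁻¹) ^ (-p) * (1 + ‖x‖) ^ (- -p) := by
        rw [neg_neg]
        exact mul_le_mul_of_nonneg_left (rpow_le_rpow_of_nonpos (by positivity) hle hp0.le)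
          (by positivity)

lemma setLIntegral_compl_ball_half_kernelDiff_le {a θ : ℝ} (ha : a ≤ 0) (hθ : 0 ≤ θ) {u : E}
    (hu : ‖u‖ = 1) :
    ∫⁻ y in (ball 0 (1 / 2))ᶜ, ENNReal.ofReal (|‖u - y‖ ^ a - ‖u‖ ^ a| * ‖y‖ ^ (-θ)) ∂μ ≤
      ENNReal.ofReal (2 ^ θ) * ∫⁻ w in ball 0 1, ENNReal.ofReal (‖w‖ ^ a) ∂μ +
        ∫⁻ y in (ball 0 (1 / 2))ᶜ, ENNReal.ofReal (‖y‖ ^ (-θ)) ∂μ := by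
  set g := (ball (0 : E) 1).indicator fun w => ENNReal.ofReal (‖w‖ ^ a)
  calc ∫⁻ y in (ball 0 (1 / 2))ᶜ, ENNReal.ofReal (|‖u - y‖ ^ a - ‖u‖ ^ a| * ‖y‖ ^ (-θ)) ∂μ
      ≤ ∫⁻ y in (ball 0 (1 / 2))ᶜ, (ENNReal.ofReal (2 ^ θ) * g (u - y) +
          ENNReal.ofReal (‖y‖ ^ (-θ))) ∂μ :=
        setLIntegral_mono' measurableSet_ball.compl fun y hy =>
          kernelDiff_le_of_half_le_norm ha hθ hu (by simpa using hy)
    _ = ENNReal.ofReal (2 ^ θ) * ∫⁻ y in (ball 0 (1 / 2))ᶜ, g (u - y) ∂μ +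
          ∫⁻ y in (ball 0 (1 / 2))ᶜ, ENNReal.ofReal (‖y‖ ^ (-θ)) ∂μ := by
        rw [lintegral_add_right _ (by fun_prop), lintegral_const_mul' _ _ ENNReal.ofReal_ne_top]
    _ ≤ ENNReal.ofReal (2 ^ θ) * ∫⁻ y, g (u - y) ∂μ +
          ∫⁻ y in (ball 0 (1 / 2))ᶜ, ENNReal.ofReal (‖y‖ ^ (-θ)) ∂μ := by
        gcongr
        exact Measure.restrict_le_self
    _ = ENNReal.ofReal (2 ^ θ) * ∫⁻ w in ball 0 1, ENNReal.ofReal (‖w‖ ^ a) ∂μ +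
          ∫⁻ y in (ball 0 (1 / 2))ᶜ, ENNReal.ofReal (‖y‖ ^ (-θ)) ∂μ := by
        rw [lintegral_sub_left_eq_self, lintegral_indicator measurableSet_ball]

lemma exists_kernelDiffIntegral_le_of_norm_eq_one [Nontrivial E] {a θ : ℝ}
    (hda : -(finrank ℝ E : ℝ) < a) (ha : a ≤ 0) (hdθ : (finrank ℝ E : ℝ) < θ)
    (hθd : θ < finrank ℝ E + 1) :
    ∃ B : ℝ≥0∞, B ≠ ∞ ∧ ∀ u : E, ‖u‖ = 1 → kernelDiffIntegral μ a θ u ≤ B := by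
  have hθ : 0 ≤ θ := le_trans (by positivity) hdθ.le
  have hnear := lintegral_rpow_norm_ball_lt_top μ (p := 1 - θ) (by linarith) (1 / 2)
  have hsing := lintegral_rpow_norm_ball_lt_top μ hda 1
  have htail := lintegral_rpow_norm_compl_ball_lt_top μ (p := -θ) (by linarith) one_half_pos
  refine ⟨_, ?_, fun u hu => (lintegral_add_compl _ measurableSet_ball).symm.trans_le
    (add_le_add (setLIntegral_ball_half_kernelDiff_le μ ha hu)
      (setLIntegral_compl_ball_half_kernelDiff_le μ ha hθ hu))⟩
  finiteness

lemma lintegral_comp_inv_smul_of_pos (f : E → ℝ≥0∞) {c : ℝ} (hc : 0 < c) :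
    ∫⁻ x, f (c⁻¹ • x) ∂μ = ENNReal.ofReal (c ^ finrank ℝ E) * ∫⁻ x, f x ∂μ := by
  let e : E ≃ᵐ E := (Homeomorph.smul (Units.mk0 c⁻¹ (inv_ne_zero hc.ne'))).toMeasurableEquiv
  rw [show (fun x => f (c⁻¹ • x)) = fun x => f (e x) from rfl, ← lintegral_map_equiv _ e,
    show ⇑e = (c⁻¹ • ·) from rfl, Measure.map_addHaar_smul μ (inv_ne_zero hc.ne'),
    lintegral_smul_measure, inv_pow, inv_inv, abs_of_pos (by positivity), smul_eq_mul]

lemma kernelDiffIntegral_smul (a θ : ℝ) (u : E) {c : ℝ} (hc : 0 < c) :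
    kernelDiffIntegral μ a θ (c • u) =
      ENNReal.ofReal (c ^ (finrank ℝ E + a - θ)) * kernelDiffIntegral μ a θ u := by
  set G : E → ℝ≥0∞ := fun z =>
    ENNReal.ofReal (|‖c • u - c • z‖ ^ a - ‖c • u‖ ^ a| * ‖c • z‖ ^ (-θ))
  have hscale : ∀ z : E, G z =
        ENNReal.ofReal (c ^ (a - θ)) *
          ENNReal.ofReal (|‖u - z‖ ^ a - ‖u‖ ^ a| * ‖z‖ ^ (-θ)) := fun z => by
    simp only [G]
    rw [← smul_sub, norm_smul, norm_smul, norm_smul, norm_of_nonneg hc.le,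
      mul_rpow hc.le (norm_nonneg _), mul_rpow hc.le (norm_nonneg _),
      mul_rpow hc.le (norm_nonneg _), ← mul_sub, abs_mul, abs_of_nonneg (by positivity),
      ← ENNReal.ofReal_mul (by positivity), sub_eq_add_neg a θ, rpow_add hc]
    ring_nf
  calc kernelDiffIntegral μ a θ (c • u) = ∫⁻ y, G (c⁻¹ • y) ∂μ := by
        simp only [G, smul_inv_smul₀ hc.ne', kernelDiffIntegral]
    _ = ENNReal.ofReal (c ^ finrank ℝ E) * ∫⁻ z, G z ∂μ := lintegral_comp_inv_smul_of_pos μ G hc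
    _ = ENNReal.ofReal (c ^ finrank ℝ E) *
          (ENNReal.ofReal (c ^ (a - θ)) * kernelDiffIntegral μ a θ u) := by
        rw [lintegral_congr hscale, lintegral_const_mul' _ _ ENNReal.ofReal_ne_top,
          kernelDiffIntegral]
    _ = ENNReal.ofReal (c ^ (finrank ℝ E + a - θ)) * kernelDiffIntegral μ a θ u := by
        rw [← mul_assoc, ← ENNReal.ofReal_mul (by positivity), ← rpow_natCast,
          ← rpow_add hc, add_sub_assoc]

theorem exists_kernelDiffIntegral_le_mul_rpow [Nontrivial E] {a θ : ℝ}
    (hda : -(finrank ℝ E : ℝ) < a) (ha : a ≤ 0) (hdθ : (finrank ℝ E : ℝ) < θ)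
    (hθd : θ < finrank ℝ E + 1) :
    ∃ C : ℝ, 0 < C ∧ ∀ x : E, x ≠ 0 →
      kernelDiffIntegral μ a θ x ≤ ENNReal.ofReal (C * ‖x‖ ^ (finrank ℝ E + a - θ)) := by
  obtain ⟨B, hB, hBu⟩ := exists_kernelDiffIntegral_le_of_norm_eq_one μ hda ha hdθ hθd
  refine ⟨B.toReal + 1, by positivity, fun x hx => ?_⟩
  have hx0 : 0 < ‖x‖ := norm_pos_iff.2 hx
  calc kernelDiffIntegral μ a θ x = kernelDiffIntegral μ a θ (‖x‖ • (‖x‖⁻¹ • x)) := by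
        rw [smul_inv_smul₀ hx0.ne']
    _ = ENNReal.ofReal (‖x‖ ^ (finrank ℝ E + a - θ)) * kernelDiffIntegral μ a θ (‖x‖⁻¹ • x) :=
        kernelDiffIntegral_smul μ a θ _ hx0
    _ ≤ ENNReal.ofReal (‖x‖ ^ (finrank ℝ E + a - θ)) * ENNReal.ofReal (B.toReal + 1) := by
        gcongr
        refine (hBu _ (norm_smul_inv_norm hx)).trans ?_
        rw [ENNReal.le_ofReal_iff_toReal_le hB (by positivity)]
        linarith
    _ = ENNReal.ofReal ((B.toReal + 1) * ‖x‖ ^ (finrank ℝ E + a - θ)) := by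
        rw [← ENNReal.ofReal_mul (by positivity), mul_comm]

end HaarMeasure

theorem kernel_difference_integral_estimate_general (N : ℕ) (ℓ θ : ℝ)
    (hℓ0 : 0 < ℓ) (hℓN : ℓ < N) (hθ1 : (N : ℝ) < θ) (hθ2 : θ < N + 1) :
    ∃ C : ℝ, 0 < C ∧ ∀ x : EuclideanSpace ℝ (Fin N), x ≠ 0 →
      (∫⁻ y, ENNReal.ofReal
          (|‖x - y‖ ^ (ℓ - (N : ℝ)) - ‖x‖ ^ (ℓ - (N : ℝ))| * ‖y‖ ^ (-θ)))
        ≤ ENNReal.ofReal (C * ‖x‖ ^ (ℓ - θ)) := by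
  have : Nontrivial (EuclideanSpace ℝ (Fin N)) :=
    Module.nontrivial_of_finrank_pos (R := ℝ) (by simpa using (hℓ0.trans hℓN))
  have hbound := exists_kernelDiffIntegral_le_mul_rpow
    (volume : Measure (EuclideanSpace ℝ (Fin N))) (a := ℓ - N) (θ := θ)
    (by rw [finrank_euclideanSpace_fin]; linarith) (by linarith)
    (by rwa [finrank_euclideanSpace_fin]) (by rwa [finrank_euclideanSpace_fin])
  simpa [kernelDiffIntegral] using hbound

/-- The estimate `∫ |K(x-y) - K(x)| |y|^{-θ} dy ≲ |x|^{ℓ-θ}` for `K(x) = |x|^{ℓ-N}`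
and `N < θ < N+1` (Section 4 of the paper). -/
theorem kernel_difference_integral_estimate (N : ℕ) (hN : 1 ≤ N) (ℓ θ : ℝ)
    (hℓ0 : 0 < ℓ) (hℓN : ℓ < N) (hθ1 : (N : ℝ) < θ) (hθ2 : θ < N + 1) :
    ∃ C : ℝ, 0 < C ∧ ∀ x : EuclideanSpace ℝ (Fin N), x ≠ 0 →
      (∫⁻ y, ENNReal.ofReal
          (|‖x - y‖ ^ (ℓ - (N : ℝ)) - ‖x‖ ^ (ℓ - (N : ℝ))| * ‖y‖ ^ (-θ)))
        ≤ ENNReal.ofReal (C * ‖x‖ ^ (ℓ - θ)) :=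
  kernel_difference_integral_estimate_general N ℓ θ hℓ0 hℓN hθ1 hθ2
end

section
/- Let N ≥ 1, 0 < ℓ < N, 1 ≤ q < ∞ and p ≥ 1. Let u be a nonnegative function on ℝ^N with u^p locally integrable, and suppose there exists C₀ > 0 such that for every Euclidean ball B = B(x₀,r) in ℝ^N, |B|^{(1/q + ℓ/N − 1)} · ( (1/|B|) ∫_B u(x)^p dx )^{1/(pq)} ≤ C₀, where |B| denotes the Lebesgue measure of B. Then there exists C > 0 such that for every y ∈ ℝ^N with y ≠ 0, ( ∫_{ℝ^N∖B(0,2|y|)} u(x) |x|^{−(N−ℓ+1)q} dx )^{1/q} ≤ C |y|^{−1}. -/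
open MeasureTheory Real ENNReal

lemma aux_holder_one {α : Type*} [MeasurableSpace α] (μ : Measure α) {f : α → ℝ≥0∞}
    (hf : AEMeasurable f μ) {p : ℝ} (hp : 1 ≤ p) :
    ∫⁻ x, f x ∂μ ≤ (∫⁻ x, f x ^ p ∂μ) ^ (1/p) * (μ Set.univ) ^ (1 - 1/p) := by
  rcases eq_or_lt_of_le hp with h1 | h1
  · simp [← h1]
  · have hpq := Real.HolderConjugate.conjExponent h1
    have h := ENNReal.lintegral_mul_le_Lp_mul_Lq μ hpq hf
      (aemeasurable_const (b := (1:ℝ≥0∞)))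
    simp only [Pi.mul_apply, mul_one, ENNReal.one_rpow, lintegral_one,
      lintegral_const, one_mul] at h
    have h2 : 1 / Real.conjExponent p = 1 - 1/p := by
      have := hpq.one_sub_inv
      rw [one_div, one_div, ← this]
    rwa [h2] at h

lemma aux_real_bound (p q β C₀ V I : ℝ) (hp : 1 ≤ p) (hq : 1 ≤ q) (hC₀ : 0 < C₀) (hV : 0 < V)
    (hI : 0 ≤ I) (h : V ^ β * (V⁻¹ * I) ^ (1/(p*q)) ≤ C₀) :
    I ≤ C₀ ^ (p*q) * V ^ (1 - β*(p*q)) := by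
  have hp0 : (0:ℝ) < p := lt_of_lt_of_le one_pos hp
  have hq0 : (0:ℝ) < q := lt_of_lt_of_le one_pos hq
  have hpq0 : (0:ℝ) < p*q := mul_pos hp0 hq0
  have hVβ : (0:ℝ) < V ^ β := Real.rpow_pos_of_pos hV β
  have h1 : (V⁻¹ * I) ^ (1/(p*q)) ≤ C₀ * V ^ (-β) := by
    rw [Real.rpow_neg hV.le]
    rw [mul_comm, ← le_div_iff₀ hVβ] at h
    calc (V⁻¹ * I) ^ (1/(p*q)) ≤ C₀ / V ^ β := h
      _ = C₀ * (V ^ β)⁻¹ := div_eq_mul_inv _ _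
  have hbase : 0 ≤ V⁻¹ * I := mul_nonneg (inv_nonneg.2 hV.le) hI
  have h2 : V⁻¹ * I ≤ (C₀ * V ^ (-β)) ^ (p*q) := by
    have := Real.rpow_le_rpow (Real.rpow_nonneg hbase _) h1 hpq0.le
    rwa [← Real.rpow_mul hbase, one_div, inv_mul_cancel₀ hpq0.ne', Real.rpow_one] at this
  have h3 : (C₀ * V ^ (-β)) ^ (p*q) = C₀ ^ (p*q) * V ^ (-β*(p*q)) := by
    rw [Real.mul_rpow hC₀.le (Real.rpow_nonneg hV.le _), ← Real.rpow_mul hV.le]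
  rw [h3] at h2
  have h4 : I ≤ V * (C₀ ^ (p*q) * V ^ (-β*(p*q))) := by
    rwa [inv_mul_le_iff₀ hV] at h2
  calc I ≤ V * (C₀ ^ (p*q) * V ^ (-β*(p*q))) := h4
    _ = C₀ ^ (p*q) * V ^ (1 - β*(p*q)) := by
        rw [sub_eq_add_neg, Real.rpow_add hV, Real.rpow_one, neg_mul]; ring

/-- Example 3.5 of the paper: a limit case of the Sawyer–Wheeden bump condition
implies the tail estimate `(∫_{|x|>2|y|} u(x) |x|^{-(N-ℓ+1)q} dx)^{1/q} ≲ |y|^{-1}`. -/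
theorem bump_condition_implies_tail_estimate (N : ℕ) (hN : 1 ≤ N) (ℓ q p : ℝ)
    (hℓ0 : 0 < ℓ) (hℓN : ℓ < N) (hq1 : 1 ≤ q) (hp : 1 ≤ p)
    (u : EuclideanSpace ℝ (Fin N) → ℝ)
    (hu0 : ∀ x, 0 ≤ u x)
    (hup : LocallyIntegrable (fun x => u x ^ p))
    (C₀ : ℝ) (hC₀ : 0 < C₀)
    (hbump : ∀ (x₀ : EuclideanSpace ℝ (Fin N)) (r : ℝ), 0 < r →
      (volume (Metric.ball x₀ r)).toReal ^ (1 / q + ℓ / N - 1) *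
        ((volume (Metric.ball x₀ r)).toReal⁻¹ *
          ∫ x in Metric.ball x₀ r, u x ^ p) ^ (1 / (p * q)) ≤ C₀) :
    ∃ C : ℝ, 0 < C ∧ ∀ y : EuclideanSpace ℝ (Fin N), y ≠ 0 →
      (∫⁻ x in (Metric.ball (0 : EuclideanSpace ℝ (Fin N)) (2 * ‖y‖))ᶜ,
          ENNReal.ofReal (u x * ‖x‖ ^ (-((N : ℝ) - ℓ + 1) * q))) ^ (1 / q)
        ≤ ENNReal.ofReal (C * ‖y‖⁻¹) := by
  haveI : Nonempty (Fin N) := ⟨⟨0, hN⟩⟩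
  have hp0 : (0:ℝ) < p := lt_of_lt_of_le one_pos hp
  have hq0 : (0:ℝ) < q := lt_of_lt_of_le one_pos hq1
  have hN0 : (0:ℝ) < (N:ℝ) := by exact_mod_cast hN
  -- constants
  set c : ℝ := (volume (Metric.ball (0:EuclideanSpace ℝ (Fin N)) 1)).toReal with hcdef
  have hvol1_lt : volume (Metric.ball (0:EuclideanSpace ℝ (Fin N)) 1) < ⊤ := measure_ball_lt_top
  have hc0 : 0 < c := ENNReal.toReal_pos (Metric.measure_ball_pos volume 0 one_pos).ne' hvol1_lt.ne
  set γ : ℝ := q * ((N:ℝ) - ℓ) with hγdef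
  have hγ0 : 0 < γ := mul_pos hq0 (by linarith)
  set K : ℝ := C₀ ^ q * c ^ (γ / (N:ℝ)) with hKdef
  have hK0 : 0 < K := mul_pos (Real.rpow_pos_of_pos hC₀ _) (Real.rpow_pos_of_pos hc0 _)
  -- measurability of ofReal ∘ u
  have hUmeas : AEMeasurable (fun x => ENNReal.ofReal (u x))
      (volume : Measure (EuclideanSpace ℝ (Fin N))) := by
    have h1 : AEMeasurable (fun x => u x ^ p)
        (volume : Measure (EuclideanSpace ℝ (Fin N))) :=
      hup.aestronglyMeasurable.aemeasurable
    have h2 : (fun x => u x) = fun x => (u x ^ p) ^ p⁻¹ := by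
      funext x; rw [Real.rpow_rpow_inv (hu0 x) hp0.ne']
    have h3 : AEMeasurable (fun x => u x)
        (volume : Measure (EuclideanSpace ℝ (Fin N))) := by
      rw [h2]
      exact (Real.continuous_rpow_const (by positivity)).measurable.comp_aemeasurable h1
    exact ENNReal.measurable_ofReal.comp_aemeasurable h3
  -- volume of balls
  have hvol : ∀ s : ℝ, 0 < s →
      (volume (Metric.ball (0:EuclideanSpace ℝ (Fin N)) s)).toReal = s ^ (N:ℝ) * c := by
    intro s hs
    rw [Measure.addHaar_ball _ _ hs.le, finrank_euclideanSpace_fin,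
      ENNReal.toReal_mul, ENNReal.toReal_ofReal (pow_nonneg hs.le N), ← hcdef,
      Real.rpow_natCast]
  -- MAIN1 : ball estimate for the lintegral of u
  have main1 : ∀ s : ℝ, 0 < s →
      ∫⁻ x in Metric.ball (0:EuclideanSpace ℝ (Fin N)) s, ENNReal.ofReal (u x)
        ≤ ENNReal.ofReal (K * s ^ γ) := by
    intro s hs
    have hμB_lt : volume (Metric.ball (0:EuclideanSpace ℝ (Fin N)) s) < ⊤ := measure_ball_lt_top
    have hV0 : 0 < (volume (Metric.ball (0:EuclideanSpace ℝ (Fin N)) s)).toReal :=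
      ENNReal.toReal_pos (Metric.measure_ball_pos volume 0 hs).ne' hμB_lt.ne
    set V : ℝ := (volume (Metric.ball (0:EuclideanSpace ℝ (Fin N)) s)).toReal with hVdef
    set I : ℝ := ∫ x in Metric.ball (0:EuclideanSpace ℝ (Fin N)) s, u x ^ p with hIdef
    have hint : IntegrableOn (fun x => u x ^ p)
        (Metric.ball (0:EuclideanSpace ℝ (Fin N)) s) :=
      (hup.integrableOn_isCompact (isCompact_closedBall (0:EuclideanSpace ℝ (Fin N)) s)).mono_set
        Metric.ball_subset_closedBall
    have hI0 : 0 ≤ I := integral_nonneg fun x => Real.rpow_nonneg (hu0 x) p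
    set α : ℝ := 1 - (1/q + ℓ/(N:ℝ) - 1) * (p*q) with hαdef
    have hIbound : I ≤ C₀ ^ (p*q) * V ^ α :=
      aux_real_bound p q _ C₀ V I hp hq1 hC₀ hV0 hI0 (hbump 0 s hs)
    -- lintegral of the p-th power
    have hlint_eq : ∫⁻ x in Metric.ball (0:EuclideanSpace ℝ (Fin N)) s,
        (ENNReal.ofReal (u x)) ^ p = ENNReal.ofReal I := by
      rw [hIdef, ofReal_integral_eq_lintegral_ofReal hint
        (ae_of_all _ fun x => Real.rpow_nonneg (hu0 x) p)]
      exact lintegral_congr fun x => ENNReal.ofReal_rpow_of_nonneg (hu0 x) hp0.le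
    -- Hölder
    have hH := aux_holder_one
      (volume.restrict (Metric.ball (0:EuclideanSpace ℝ (Fin N)) s)) hUmeas.restrict hp
    rw [Measure.restrict_apply_univ, hlint_eq] at hH
    refine hH.trans ?_
    have e1 : (ENNReal.ofReal I) ^ (1/p) ≤ ENNReal.ofReal ((C₀^(p*q) * V^α) ^ (1/p)) := by
      rw [← ENNReal.ofReal_rpow_of_nonneg (by positivity : (0:ℝ) ≤ C₀^(p*q) * V^α) (by positivity)]
      exact ENNReal.rpow_le_rpow (ENNReal.ofReal_le_ofReal hIbound) (by positivity)
    have e2 : (volume (Metric.ball (0:EuclideanSpace ℝ (Fin N)) s)) ^ (1 - 1/p)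
        = ENNReal.ofReal (V ^ (1 - 1/p)) := by
      rw [← ENNReal.ofReal_toReal hμB_lt.ne, ← hVdef,
        ENNReal.ofReal_rpow_of_nonneg hV0.le (by rw [sub_nonneg]; exact div_le_one_of_le₀ hp hp0.le)]
    rw [e2]
    refine (mul_le_mul_left e1 _).trans ?_
    rw [← ENNReal.ofReal_mul (by positivity)]
    refine ENNReal.ofReal_le_ofReal (le_of_eq ?_)
    -- real computation of the exponents
    have hVeq : V = s ^ (N:ℝ) * c := hvol s hs
    have hexp : α / p + (1 - 1/p) = γ / (N:ℝ) := by
      rw [hαdef, hγdef]; field_simp; ring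
    have hqq : (p*q)*(1/p) = q := by field_simp
    have hexp2 : α*(1/p) + (1 - 1/p) = γ/(N:ℝ) := by
      rw [hαdef, hγdef]; field_simp; ring
    have : (C₀^(p*q) * V^α) ^ (1/p) * V ^ (1 - 1/p) = C₀ ^ q * V ^ (γ/(N:ℝ)) := by
      rw [Real.mul_rpow (by positivity) (Real.rpow_nonneg hV0.le _),
        ← Real.rpow_mul hC₀.le, ← Real.rpow_mul hV0.le, mul_assoc,
        ← Real.rpow_add hV0, hqq, hexp2]
    rw [this, hVeq, Real.mul_rpow (Real.rpow_nonneg (le_of_lt hs) _) hc0.le,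
      ← Real.rpow_mul hs.le]
    have hNγ : (N:ℝ) * (γ/(N:ℝ)) = γ := by field_simp
    rw [hNγ, hKdef]; ring
  -- the annulus estimate
  set e : ℝ := -((N:ℝ) - ℓ + 1) * q with hedef
  have he0 : e ≤ 0 := by
    rw [hedef]
    have h1 : (0:ℝ) ≤ (N:ℝ) - ℓ + 1 := by linarith
    nlinarith
  have annulus : ∀ t : ℝ, 0 < t →
      ∫⁻ x in (Metric.ball (0:EuclideanSpace ℝ (Fin N)) (2*t) \ Metric.ball 0 t),
        ENNReal.ofReal (u x * ‖x‖ ^ e) ≤ ENNReal.ofReal ((K * 2 ^ γ) * t ^ (e + γ)) := by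
    intro t ht
    have hstep : ∫⁻ x in (Metric.ball (0:EuclideanSpace ℝ (Fin N)) (2*t) \ Metric.ball 0 t),
        ENNReal.ofReal (u x * ‖x‖ ^ e)
        ≤ ∫⁻ x in (Metric.ball (0:EuclideanSpace ℝ (Fin N)) (2*t) \ Metric.ball 0 t),
          ENNReal.ofReal (t ^ e) * ENNReal.ofReal (u x) := by
      refine setLIntegral_mono' (measurableSet_ball.diff measurableSet_ball) ?_
      intro x hx
      have hxt : t ≤ ‖x‖ := by
        have h2 := hx.2
        rw [Metric.mem_ball, dist_zero_right] at h2
        exact not_lt.1 h2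
      have h1 : ‖x‖ ^ e ≤ t ^ e := Real.rpow_le_rpow_of_nonpos ht hxt he0
      rw [← ENNReal.ofReal_mul (Real.rpow_nonneg ht.le _)]
      refine ENNReal.ofReal_le_ofReal ?_
      rw [mul_comm (t ^ e)]
      exact mul_le_mul_of_nonneg_left h1 (hu0 x)
    refine hstep.trans ?_
    rw [lintegral_const_mul' _ _ ENNReal.ofReal_ne_top]
    have h2t : 0 < 2 * t := by linarith
    have hmono : ∫⁻ x in (Metric.ball (0:EuclideanSpace ℝ (Fin N)) (2*t) \ Metric.ball 0 t),
        ENNReal.ofReal (u x) ≤ ∫⁻ x in Metric.ball (0:EuclideanSpace ℝ (Fin N)) (2*t),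
        ENNReal.ofReal (u x) := lintegral_mono_set Set.diff_subset
    refine le_trans (mul_le_mul_right (hmono.trans (main1 _ h2t)) _) ?_
    rw [← ENNReal.ofReal_mul (Real.rpow_nonneg ht.le _)]
    refine ENNReal.ofReal_le_ofReal (le_of_eq ?_)
    rw [Real.mul_rpow (by norm_num) ht.le, Real.rpow_add ht]
    ring
  -- covering and summation
  refine ⟨((K * 2 ^ γ) * (1 - 2 ^ (-q))⁻¹) ^ (1/q) * 2⁻¹, ?_, ?_⟩
  · have h2q : (2:ℝ) ^ (-q) < 1 :=
      Real.rpow_lt_one_of_one_lt_of_neg (by norm_num : (1:ℝ) < 2) (by linarith : -q < 0)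
    have h1 : (0:ℝ) < 1 - 2 ^ (-q) := by linarith
    have h2 : (0:ℝ) < K * 2 ^ γ := mul_pos hK0 (Real.rpow_pos_of_pos (by norm_num) _)
    positivity
  · intro y hy
    have hynorm : 0 < ‖y‖ := norm_pos_iff.2 hy
    set R : ℝ := 2 * ‖y‖ with hRdef
    have hR0 : 0 < R := by positivity
    -- covering by dyadic annuli
    have hcover : (Metric.ball (0:EuclideanSpace ℝ (Fin N)) R)ᶜ ⊆
        ⋃ k : ℕ, (Metric.ball (0:EuclideanSpace ℝ (Fin N)) (2 ^ (k+1) * R) \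
          Metric.ball 0 (2 ^ k * R)) := by
      intro x hx
      have hxR : R ≤ ‖x‖ := by
        rw [Set.mem_compl_iff, Metric.mem_ball, dist_zero_right, not_lt] at hx
        exact hx
      have ht1 : (1:ℝ) ≤ ‖x‖ / R := (one_le_div hR0).2 hxR
      obtain ⟨n, hn1, hn2⟩ := exists_nat_pow_near ht1 (by norm_num : (1:ℝ) < 2)
      refine Set.mem_iUnion.2 ⟨n, ?_, ?_⟩
      · rw [Metric.mem_ball, dist_zero_right]
        calc ‖x‖ = (‖x‖ / R) * R := by field_simp
          _ < 2 ^ (n+1) * R := mul_lt_mul_of_pos_right hn2 hR0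
      · show x ∉ Metric.ball 0 (2 ^ n * R)
        rw [Metric.mem_ball, dist_zero_right, not_lt]
        calc (2:ℝ) ^ n * R ≤ (‖x‖ / R) * R := mul_le_mul_of_nonneg_right hn1 hR0.le
          _ = ‖x‖ := by field_simp
    -- sum the annulus estimates
    have hsum : ∫⁻ x in (Metric.ball (0:EuclideanSpace ℝ (Fin N)) R)ᶜ,
        ENNReal.ofReal (u x * ‖x‖ ^ e)
        ≤ ∑' k : ℕ, ENNReal.ofReal ((K * 2 ^ γ) * (2 ^ k * R) ^ (e + γ)) := by
      refine le_trans (lintegral_mono_set hcover) ?_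
      refine le_trans (lintegral_iUnion_le _ _) ?_
      refine ENNReal.tsum_le_tsum fun k => ?_
      have hk0 : (0:ℝ) < 2 ^ k * R := by positivity
      have hann := annulus (2 ^ k * R) hk0
      have heq : (2:ℝ) * (2 ^ k * R) = 2 ^ (k+1) * R := by ring
      rwa [heq] at hann
    -- rewrite each term as a geometric term
    have hterm : ∀ k : ℕ, ENNReal.ofReal ((K * 2 ^ γ) * (2 ^ k * R) ^ (e + γ))
        = ENNReal.ofReal ((K * 2 ^ γ) * R ^ (e + γ)) * (ENNReal.ofReal ((2:ℝ) ^ (e+γ))) ^ k := by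
      intro k
      have h2e : (0:ℝ) ≤ (2:ℝ) ^ (e + γ) := Real.rpow_nonneg (by norm_num) _
      have hsplit : ((2:ℝ) ^ k * R) ^ (e + γ) = ((2:ℝ) ^ (e+γ)) ^ k * R ^ (e + γ) := by
        rw [Real.mul_rpow (by positivity) hR0.le, ← Real.rpow_natCast ((2:ℝ)^(e+γ)) k,
          ← Real.rpow_natCast (2:ℝ) k, ← Real.rpow_mul (by norm_num),
          ← Real.rpow_mul (by norm_num), mul_comm (e+γ)]
      rw [hsplit, ← ENNReal.ofReal_pow h2e, ← ENNReal.ofReal_mul (by positivity)]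
      exact congrArg ENNReal.ofReal (by ring)
    have heγ : e + γ = -q := by rw [hedef, hγdef]; ring
    have h2qlt : (2:ℝ) ^ (-q) < 1 :=
      Real.rpow_lt_one_of_one_lt_of_neg (by norm_num : (1:ℝ) < 2) (by linarith : -q < 0)
    have hpos1 : (0:ℝ) < 1 - 2 ^ (-q) := by linarith
    have hK2 : (0:ℝ) < K * 2 ^ γ := mul_pos hK0 (Real.rpow_pos_of_pos (by norm_num) _)
    have hMpos : (0:ℝ) < (K * 2 ^ γ) * (1 - 2 ^ (-q))⁻¹ := mul_pos hK2 (inv_pos.2 hpos1)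
    have hgeo : ∑' k : ℕ, ENNReal.ofReal ((K * 2 ^ γ) * (2 ^ k * R) ^ (e + γ))
        = ENNReal.ofReal ((K * 2 ^ γ) * R ^ (e + γ)) *
          (1 - ENNReal.ofReal ((2:ℝ) ^ (e+γ)))⁻¹ := by
      simp_rw [hterm]
      rw [ENNReal.tsum_mul_left, ENNReal.tsum_geometric]
    have hinv : (1 - ENNReal.ofReal ((2:ℝ) ^ (e+γ)))⁻¹
        = ENNReal.ofReal ((1 - (2:ℝ) ^ (e+γ))⁻¹) := by
      rw [← ENNReal.ofReal_one, ← ENNReal.ofReal_sub 1 (Real.rpow_nonneg (by norm_num) _),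
        ENNReal.ofReal_inv_of_pos (by rw [heγ]; exact hpos1)]
    have htotal : ∫⁻ x in (Metric.ball (0:EuclideanSpace ℝ (Fin N)) R)ᶜ,
        ENNReal.ofReal (u x * ‖x‖ ^ e)
        ≤ ENNReal.ofReal (((K * 2 ^ γ) * (1 - 2 ^ (-q))⁻¹) * R ^ (-q)) := by
      refine hsum.trans ?_
      rw [hgeo, hinv, ← ENNReal.ofReal_mul
        (mul_nonneg hK2.le (Real.rpow_nonneg hR0.le _))]
      refine ENNReal.ofReal_le_ofReal (le_of_eq ?_)
      rw [heγ]; ring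
    refine (ENNReal.rpow_le_rpow htotal (by positivity)).trans ?_
    rw [ENNReal.ofReal_rpow_of_nonneg
      (mul_nonneg hMpos.le (Real.rpow_nonneg hR0.le _)) (by positivity)]
    refine ENNReal.ofReal_le_ofReal (le_of_eq ?_)
    rw [Real.mul_rpow hMpos.le (Real.rpow_nonneg hR0.le _), ← Real.rpow_mul hR0.le]
    have hq' : -q * (1/q) = -1 := by field_simp
    rw [hq', Real.rpow_neg_one, hRdef, mul_inv]
    ring
end
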